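/- arXiv:2502.09817 — 5 statements merged into one kernel-verified Lean document; each statement's English description precedes it below -/
import Mathlib

section
/- Let 𝔽 be a finite field with q elements and let W be a random variable uniformly distributed on the K×L matrices over 𝔽. Then for any matrices F ∈ 𝔽^{M×K} and G ∈ 𝔽^{N×K}, the conditional entropy satisfies H[W | (F·W, G·W)] = (K − rank([F; G])) · L · log q, where [F; G] denotes the row stack of F and G. -/
/-!
Shannon entropy machinery for finitely-supported random variables on a finite
probability space, and the definition of a vector-linear secure aggregation
scheme (Yuan–Sun, "Vector Linear Secure Aggregation").
-/

open scoped BigOperators Classical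

namespace SecAgg

noncomputable section

variable {Ω : Type*} [Fintype Ω]

/-- Probability that the random variable `X` takes the value `a`, under the
probability mass function `p` on the finite sample space `Ω`. -/
def pr {α : Type*} (p : Ω → ℝ) (X : Ω → α) (a : α) : ℝ :=
  ∑ ω, if X ω = a then p ω else 0

/-- Shannon entropy (natural-log units) of a random variable `X` on a finite
probability space with mass function `p`. -/
def H {α : Type*} (p : Ω → ℝ) (X : Ω → α) : ℝ :=
  ∑ a ∈ Finset.univ.image X, Real.negMulLog (pr p X a)

/-- Conditional Shannon entropy `H[X | Y] = H[(X,Y)] - H[Y]`. -/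
def Hc {α β : Type*} (p : Ω → ℝ) (X : Ω → α) (Y : Ω → β) : ℝ :=
  H p (fun ω => (X ω, Y ω)) - H p Y

/-- Mutual information `I[X : Y] = H[X] + H[Y] - H[(X,Y)]`. -/
def MI {α β : Type*} (p : Ω → ℝ) (X : Ω → α) (Y : Ω → β) : ℝ :=
  H p X + H p Y - H p (fun ω => (X ω, Y ω))

/-- Conditional mutual information
`I[X : Y | Z] = H[(X,Z)] + H[(Y,Z)] - H[(X,Y,Z)] - H[Z]`. -/
def CMI {α β γ : Type*} (p : Ω → ℝ) (X : Ω → α) (Y : Ω → β) (Z : Ω → γ) : ℝ :=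
  H p (fun ω => (X ω, Z ω)) + H p (fun ω => (Y ω, Z ω))
    - H p (fun ω => (X ω, Y ω, Z ω)) - H p Z

/-- A secure aggregation scheme for the pair of linear maps `(F, G)`:
`K` users, inputs of length `L` over the finite field `𝔽`; the server must
learn `F * W` and nothing more about `G * W`.  `κ k` is the alphabet of
user `k`'s key, `σ` the alphabet of the source key, `χ k` the alphabet of
user `k`'s message. -/
structure Scheme (𝔽 : Type) [Field 𝔽] [Fintype 𝔽] (L : ℕ) {K M N : ℕ}
    (F : Matrix (Fin M) (Fin K) 𝔽) (G : Matrix (Fin N) (Fin K) 𝔽)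
    (Ω : Type) [Fintype Ω] (κ : Fin K → Type) (σ : Type) (χ : Fin K → Type) where
  /-- probability mass function on the sample space -/
  p : Ω → ℝ
  p_nonneg : ∀ ω, 0 ≤ p ω
  p_sum_one : ∑ ω, p ω = 1
  /-- the input, a `K × L` matrix of field elements (row `k` is user `k`'s input) -/
  W : Ω → Matrix (Fin K) (Fin L) 𝔽
  /-- user `k`'s key -/
  Z : ∀ k : Fin K, Ω → κ k
  /-- the source key -/
  Zsrc : Ω → σ
  /-- user `k`'s message -/
  X : ∀ k : Fin K, Ω → χ k
  /-- the input is uniformly distributed -/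
  W_unif : ∀ w : Matrix (Fin K) (Fin L) 𝔽,
    pr p W w = (Fintype.card (Matrix (Fin K) (Fin L) 𝔽) : ℝ)⁻¹
  /-- the input is independent of all keys (including the source key) -/
  indep : ∀ (w : Matrix (Fin K) (Fin L) 𝔽) (z : (∀ k, κ k) × σ),
    pr p (fun ω => (W ω, ((fun k => Z k ω), Zsrc ω))) (w, z)
      = pr p W w * pr p (fun ω => ((fun k => Z k ω), Zsrc ω)) z
  /-- each key is a deterministic function of the source key -/
  Z_det : ∀ k : Fin K, ∃ f : σ → κ k, ∀ ω, Z k ω = f (Zsrc ω)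
  /-- each message is a deterministic function of (own input row, own key) -/
  X_det : ∀ k : Fin K, ∃ f : (Fin L → 𝔽) → κ k → χ k, ∀ ω, X k ω = f (W ω k) (Z k ω)
  /-- correctness: `F ⬝ W` is determined by the messages -/
  correct : Hc p (fun ω => F * W ω) (fun ω k => X k ω) = 0
  /-- security: the messages reveal nothing about `G ⬝ W` beyond `F ⬝ W` -/
  secure : CMI p (fun ω => G * W ω) (fun ω k => X k ω) (fun ω => F * W ω) = 0

end

end SecAgg
namespace SecAgg

section AuxLemmas

variable {Ω : Type} [Fintype Ω]

/-- Pushforward formula for `pr` along a map `f`. -/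
lemma pr_comp {α β : Type*} [Fintype α] (p : Ω → ℝ) (X : Ω → α) (f : α → β) (b : β) :
    pr p (fun ω => f (X ω)) b = ∑ a : α, if f a = b then pr p X a else 0 := by
  classical
  unfold pr
  have h : ∀ a : α, (if f a = b then ∑ ω, if X ω = a then p ω else 0 else 0)
      = ∑ ω, if X ω = a then (if f a = b then p ω else 0) else 0 := by
    intro a
    split
    · rfl
    · simp
  simp_rw [h]
  rw [Finset.sum_comm]
  refine Finset.sum_congr rfl fun ω _ => ?_
  rw [Finset.sum_ite_eq Finset.univ (X ω) (fun a => if f a = b then p ω else 0)]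
  simp

/-- Entropy is invariant under injective relabeling. -/
lemma H_comp_injective {α β : Type*} (p : Ω → ℝ) (X : Ω → α) (g : α → β)
    (hg : Function.Injective g) :
    H p (fun ω => g (X ω)) = H p X := by
  classical
  unfold H
  have himg : (Finset.univ.image fun ω => g (X ω)) = (Finset.univ.image X).image g := by
    rw [Finset.image_image]; rfl
  rw [himg, Finset.sum_image (fun a _ b _ h => hg h)]
  refine Finset.sum_congr rfl fun a _ => ?_
  congr 1
  unfold pr
  refine Finset.sum_congr rfl fun ω _ => ?_
  simp [hg.eq_iff]


/-- Master computation: if `X` is uniform on `α` and all fibers of `f` over the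
image of `f` have the same cardinality `c`, then `H[X | f(X)] = log c`. -/
lemma Hc_uniform {α β : Type*} [Fintype α] [Nonempty α] (p : Ω → ℝ) (X : Ω → α) (f : α → β)
    (c : ℕ) (hc0 : 0 < c)
    (hsurj : Function.Surjective X)
    (hunif : ∀ a, pr p X a = (Fintype.card α : ℝ)⁻¹)
    (hfib : ∀ a : α, Nat.card {v : α // f v = f a} = c) :
    Hc p X (fun ω => f (X ω)) = Real.log c := by
  classical
  set Q : ℕ := Fintype.card α with hQ
  have hQ0 : 0 < Q := Fintype.card_pos
  -- fibers over the image have cardinality c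
  have hfib' : ∀ y ∈ Finset.univ.image f,
      (Finset.univ.filter fun v => f v = y).card = c := by
    intro y hy
    obtain ⟨a, -, rfl⟩ := Finset.mem_image.mp hy
    rw [← hfib a, Nat.card_eq_fintype_card, Fintype.card_subtype]
  set R : ℕ := (Finset.univ.image f).card with hR
  have hRc : R * c = Q := by
    have h1 := Finset.card_eq_sum_card_image f (Finset.univ : Finset α)
    rw [Finset.card_univ, Finset.sum_congr rfl hfib', Finset.sum_const, smul_eq_mul] at h1
    rw [hR]
    omega
  have hR0 : 0 < R := by
    rcases Nat.eq_zero_or_pos R with h | h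
    · rw [h, zero_mul] at hRc; omega
    · exact h
  -- image of X is everything
  have himgX : Finset.univ.image X = Finset.univ := by
    apply Finset.eq_univ_of_forall
    intro a
    obtain ⟨ω, rfl⟩ := hsurj a
    exact Finset.mem_image_of_mem X (Finset.mem_univ ω)
  -- H(X) = log Q
  have hHX : H p X = Real.log Q := by
    unfold H
    rw [himgX]
    have h2 : ∀ a ∈ (Finset.univ : Finset α),
        Real.negMulLog (pr p X a) = (Q : ℝ)⁻¹ * Real.log Q := by
      intro a _
      rw [hunif a, Real.negMulLog, Real.log_inv]
      ring
    rw [Finset.sum_congr rfl h2, Finset.sum_const, Finset.card_univ, ← hQ, nsmul_eq_mul]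
    field_simp
  -- image of Y = f ∘ X
  have himgY : (Finset.univ.image fun ω => f (X ω)) = Finset.univ.image f := by
    have h3 : (Finset.univ.image fun ω => f (X ω)) = (Finset.univ.image X).image f := by
      rw [Finset.image_image]; rfl
    rw [h3, himgX]
  -- pr of Y on the image
  have hprY : ∀ y ∈ Finset.univ.image f,
      pr p (fun ω => f (X ω)) y = (c : ℝ) / Q := by
    intro y hy
    rw [pr_comp p X f y]
    have h4 : ∀ a : α,
        (if f a = y then pr p X a else 0) = if f a = y then (Q : ℝ)⁻¹ else 0 := by
      intro a
      rw [hunif a]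
    rw [Finset.sum_congr rfl fun a _ => h4 a, ← Finset.sum_filter, Finset.sum_const,
      hfib' y hy, nsmul_eq_mul, div_eq_mul_inv]
  -- H(Y) = log Q - log c
  have hHY : H p (fun ω => f (X ω)) = Real.log Q - Real.log c := by
    unfold H
    rw [himgY, Finset.sum_congr rfl (fun y hy => by rw [hprY y hy]), Finset.sum_const, ← hR,
      nsmul_eq_mul]
    have hQR : (R : ℝ) * ((c : ℝ) / Q) = 1 := by
      have h1 : (R : ℝ) * c = Q := by exact_mod_cast hRc
      field_simp
      linarith [h1]
    have hlogdiv : Real.log ((c : ℝ) / Q) = Real.log c - Real.log Q := by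
      rw [Real.log_div (by exact_mod_cast hc0.ne') (by exact_mod_cast hQ0.ne')]
    rw [Real.negMulLog]
    calc (R : ℝ) * (-((c : ℝ) / Q) * Real.log ((c : ℝ) / Q))
        = -((R : ℝ) * ((c : ℝ) / Q)) * Real.log ((c : ℝ) / Q) := by ring
      _ = -Real.log ((c : ℝ) / Q) := by rw [hQR]; ring
      _ = Real.log Q - Real.log c := by rw [hlogdiv]; ring
  -- assemble
  have hpair : H p (fun ω => (X ω, f (X ω))) = H p X :=
    H_comp_injective p X (fun a => (a, f a)) (fun a b h => congrArg Prod.fst h)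
  have hHc : Hc p X (fun ω => f (X ω))
      = H p (fun ω => (X ω, f (X ω))) - H p (fun ω => f (X ω)) := rfl
  rw [hHc, hpair, hHX, hHY]
  ring

end AuxLemmas

/-- If `W` is uniform on `K × L` matrices over a finite field `𝔽` with `q`
elements, then `H[W | (F·W, G·W)] = (K − rank [F; G]) · L · log q`. -/
theorem cond_entropy_given_linear_images
    {𝔽 : Type} [Field 𝔽] [Fintype 𝔽] {K L M N : ℕ}
    (Ω : Type) [Fintype Ω] (p : Ω → ℝ)
    (hp0 : ∀ ω, 0 ≤ p ω) (hp1 : ∑ ω, p ω = 1)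
    (W : Ω → Matrix (Fin K) (Fin L) 𝔽)
    (hW : ∀ w : Matrix (Fin K) (Fin L) 𝔽,
      pr p W w = (Fintype.card (Matrix (Fin K) (Fin L) 𝔽) : ℝ)⁻¹)
    (F : Matrix (Fin M) (Fin K) 𝔽) (G : Matrix (Fin N) (Fin K) 𝔽) :
    Hc p W (fun ω => (F * W ω, G * W ω))
      = ((K : ℝ) - ((Matrix.fromRows F G).rank : ℝ)) * L
          * Real.log (Fintype.card 𝔽) := by
  classical
  set q : ℕ := Fintype.card 𝔽 with hq
  set S : Matrix (Fin M ⊕ Fin N) (Fin K) 𝔽 := Matrix.fromRows F G with hS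
  set r : ℕ := S.rank with hr
  have hq1 : 1 < q := Fintype.one_lt_card
  have hq0 : 0 < q := lt_trans one_pos hq1
  -- rank-nullity
  have hrank : r + Module.finrank 𝔽 (LinearMap.ker S.mulVecLin) = K := by
    rw [hr, Matrix.rank]
    rw [LinearMap.finrank_range_add_finrank_ker S.mulVecLin, Module.finrank_fin_fun]
  have hrK : r ≤ K := le_of_add_le_left hrank.le
  have hkerdim : Module.finrank 𝔽 (LinearMap.ker S.mulVecLin) = K - r := by omega
  set c : ℕ := q ^ ((K - r) * L) with hc
  have hc0 : 0 < c := by rw [hc]; positivity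
  -- columnwise description of the kernel of `v ↦ S * v`
  have hcolzero : ∀ v : Matrix (Fin K) (Fin L) 𝔽,
      S * v = 0 ↔ ∀ j, S.mulVecLin (fun i => v i j) = 0 := by
    intro v
    constructor
    · intro h j
      funext i'
      have h2 := congrFun (congrFun h i') j
      simpa [Matrix.mulVecLin_apply, Matrix.mulVec, dotProduct, Matrix.mul_apply] using h2
    · intro h
      ext i' j
      have h2 := congrFun (h j) i'
      simpa [Matrix.mulVecLin_apply, Matrix.mulVec, dotProduct, Matrix.mul_apply] using h2
  let e : {v : Matrix (Fin K) (Fin L) 𝔽 // S * v = 0} ≃ (Fin L → LinearMap.ker S.mulVecLin) :=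
  { toFun := fun v j => ⟨fun i => v.1 i j, by
      rw [LinearMap.mem_ker]
      exact (hcolzero v.1).mp v.2 j⟩
    invFun := fun f => ⟨fun i j => (f j).1 i, by
      refine (hcolzero _).mpr ?_
      intro j
      exact (f j).2⟩
    left_inv := fun v => rfl
    right_inv := fun f => rfl }
  -- cardinality of the kernel
  have hkercard : Nat.card {v : Matrix (Fin K) (Fin L) 𝔽 // S * v = 0} = c := by
    rw [Nat.card_congr e, Nat.card_eq_fintype_card, Fintype.card_fun, Fintype.card_fin,
      Module.card_eq_pow_finrank (K := 𝔽) (V := LinearMap.ker S.mulVecLin), hkerdim, ← pow_mul, ← hq, hc]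
  -- all fibers of `w ↦ (F*w, G*w)` have cardinality c
  have hiff : ∀ v a : Matrix (Fin K) (Fin L) 𝔽,
      (F * v, G * v) = (F * a, G * a) ↔ S * (v - a) = 0 := by
    intro v a
    rw [Matrix.mul_sub, sub_eq_zero, hS, Matrix.fromRows_mul, Matrix.fromRows_mul,
      Matrix.fromRows_ext_iff, Prod.ext_iff]
  have hfib : ∀ a : Matrix (Fin K) (Fin L) 𝔽,
      Nat.card {v : Matrix (Fin K) (Fin L) 𝔽 // (F * v, G * v) = (F * a, G * a)} = c := by
    intro a
    rw [← hkercard]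
    apply Nat.card_congr
    exact
    { toFun := fun v => ⟨v.1 - a, (hiff v.1 a).mp v.2⟩
      invFun := fun v => ⟨v.1 + a, by
        rw [hiff]
        simpa using v.2⟩
      left_inv := fun v => by
        ext
        simp
      right_inv := fun v => by
        ext
        simp }
  -- surjectivity of W
  have hsurj : Function.Surjective W := by
    intro w
    by_contra h
    push_neg at h
    have h0 : pr p W w = 0 := by
      unfold pr
      apply Finset.sum_eq_zero
      intro ω _
      simp [h ω]
    rw [hW w] at h0
    have hpos : (0 : ℝ) < ((Fintype.card (Matrix (Fin K) (Fin L) 𝔽) : ℝ))⁻¹ := by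
      have := Fintype.card_pos (α := Matrix (Fin K) (Fin L) 𝔽)
      positivity
    rw [h0] at hpos
    exact lt_irrefl 0 hpos
  -- apply the master lemma
  have hmain : Hc p W (fun ω => (F * W ω, G * W ω)) = Real.log c :=
    Hc_uniform p W (fun w => (F * w, G * w)) c hc0 hsurj hW hfib
  rw [hmain]
  have hcR : (c : ℝ) = (q : ℝ) ^ ((K - r) * L) := by
    rw [hc]; push_cast; ring
  rw [hcR, Real.log_pow, Nat.cast_mul, Nat.cast_sub hrK]

end SecAgg
end

section
/- Let 𝔽 be a field, let F ∈ 𝔽^{M×K} be of the block form [I_M | F̃] for some F̃ ∈ 𝔽^{M×(K−M)}, let G ∈ 𝔽^{N×K}, and set r = rank([F; G]) where [F; G] is the row stack of F and G. Then there exists a matrix V ∈ 𝔽^{(K−r)×(K−M)} such that the stacked matrix [F; G; [0_{(K−r)×M} | V]] (rows of F, then rows of G, then the rows of the block matrix whose first M columns are zero and last K−M columns are V) has rank K. -/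
/-!
Shannon entropy machinery for finitely-supported random variables on a finite
probability space, and the definition of a vector-linear secure aggregation
scheme (Yuan–Sun, "Vector Linear Secure Aggregation").
-/

open scoped BigOperators Classical

namespace SecAgg

/-- Existence of the completion matrix `V`: if `F = [I_M | F̃]` and
`r = rank [F; G]`, then there is `V ∈ 𝔽^{(K−r) × (K−M)}` such that stacking
`F`, `G` and `[0 | V]` gives a matrix of full rank `K = M + K'`. -/
theorem exists_completion_matrix
    {𝔽 : Type} [Field 𝔽] {M K' N : ℕ}
    (Ft : Matrix (Fin M) (Fin K') 𝔽) (G : Matrix (Fin N) (Fin M ⊕ Fin K') 𝔽) :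
    ∃ V : Matrix
        (Fin (M + K' - (Matrix.fromRows (Matrix.fromCols 1 Ft) G).rank))
        (Fin K') 𝔽,
      (Matrix.fromRows (Matrix.fromRows (Matrix.fromCols 1 Ft) G)
          (Matrix.fromCols
            (0 : Matrix
              (Fin (M + K' - (Matrix.fromRows (Matrix.fromCols 1 Ft) G).rank))
              (Fin M) 𝔽) V)).rank = M + K' := by
  classical
  set A := Matrix.fromRows (Matrix.fromCols 1 Ft) G with hA
  set r := A.rank with hr
  set U : Submodule 𝔽 (Fin M ⊕ Fin K' → 𝔽) := Submodule.span 𝔽 (Set.range A) with hU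
  have hUr : Module.finrank 𝔽 U = r := (Matrix.rank_eq_finrank_span_row A).symm
  -- the embedding (Fin K' → 𝔽) → (Fin M ⊕ Fin K' → 𝔽) with zero on the left
  let f : (Fin K' → 𝔽) →ₗ[𝔽] (Fin M ⊕ Fin K' → 𝔽) :=
    { toFun := fun w => Sum.elim 0 w
      map_add' := by intro x y; funext j; cases j <;> simp
      map_smul' := by intro c x; funext j; cases j <;> simp }
  let g : (Fin K' → 𝔽) →ₗ[𝔽] ((Fin M ⊕ Fin K' → 𝔽) ⧸ U) := U.mkQ.comp f
  have hE : Module.finrank 𝔽 (Fin M ⊕ Fin K' → 𝔽) = M + K' := by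
    simp [Module.finrank_pi]
  -- g is surjective
  have hgsurj : Function.Surjective g := by
    intro q
    obtain ⟨v, rfl⟩ := U.mkQ_surjective q
    set u : Fin M ⊕ Fin K' → 𝔽 := ∑ i : Fin M, v (Sum.inl i) • A (Sum.inl i) with hu
    have huU : u ∈ U := Submodule.sum_mem _ fun i _ =>
      Submodule.smul_mem _ _ (Submodule.subset_span ⟨Sum.inl i, rfl⟩)
    have huinl : ∀ i : Fin M, u (Sum.inl i) = v (Sum.inl i) := by
      intro i
      simp only [hu, Finset.sum_apply, Pi.smul_apply, smul_eq_mul, hA,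
        Matrix.fromRows_apply_inl, Matrix.fromCols_apply_inl]
      rw [Finset.sum_eq_single i]
      · simp
      · intro b _ hb; simp [Matrix.one_apply, hb]
      · simp
    refine ⟨fun j => v (Sum.inr j) - u (Sum.inr j), ?_⟩
    have : v - f (fun j => v (Sum.inr j) - u (Sum.inr j)) = u := by
      funext j
      cases j with
      | inl i => simp [f, huinl i]
      | inr j => simp [f]
    have hmem : v - f (fun j => v (Sum.inr j) - u (Sum.inr j)) ∈ U := by
      rw [this]; exact huU
    have := (Submodule.Quotient.eq U).2 hmem
    simpa [g] using this.symm
  have : FiniteDimensional 𝔽 (Fin M ⊕ Fin K' → 𝔽) := by infer_instance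
  have hQ : Module.finrank 𝔽 ((Fin M ⊕ Fin K' → 𝔽) ⧸ U) = M + K' - r := by
    have h := Submodule.finrank_quotient_add_finrank U
    rw [hUr, hE] at h
    omega
  have hrle : r ≤ M + K' := by
    have h := Submodule.finrank_quotient_add_finrank U
    rw [hUr, hE] at h
    omega
  let b : Module.Basis (Fin (M + K' - r)) 𝔽 ((Fin M ⊕ Fin K' → 𝔽) ⧸ U) :=
    Module.finBasisOfFinrankEq 𝔽 _ hQ
  choose w hw using fun i => hgsurj (b i)
  refine ⟨Matrix.of w, ?_⟩
  set B := Matrix.fromRows A (Matrix.fromCols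
      (0 : Matrix (Fin (M + K' - r)) (Fin M) 𝔽) (Matrix.of w)) with hB
  set S : Submodule 𝔽 (Fin M ⊕ Fin K' → 𝔽) := Submodule.span 𝔽 (Set.range B) with hS
  have hUS : U ≤ S := Submodule.span_mono (by
    rintro _ ⟨i, rfl⟩; exact ⟨Sum.inl i, rfl⟩)
  have hfw : ∀ i, f (w i) ∈ S := by
    intro i
    have : f (w i) = B (Sum.inr i) := by
      funext j
      cases j with
      | inl k => simp [f, hB, Matrix.fromRows_apply_inr, Matrix.fromCols_apply_inl]
      | inr k => simp [f, hB, Matrix.fromRows_apply_inr, Matrix.fromCols_apply_inr]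
    rw [this]
    exact Submodule.subset_span ⟨Sum.inr i, rfl⟩
  have htop : Submodule.map U.mkQ S = ⊤ := by
    rw [eq_top_iff, ← b.span_eq]
    refine Submodule.span_le.2 ?_
    rintro _ ⟨i, rfl⟩
    exact ⟨f (w i), hfw i, hw i⟩
  have hStop : S = ⊤ := by
    have h1 := Submodule.comap_map_eq U.mkQ S
    rw [htop, Submodule.comap_top, Submodule.ker_mkQ] at h1
    rw [sup_eq_left.2 hUS] at h1
    exact h1.symm
  have : B.rank = Module.finrank 𝔽 S := Matrix.rank_eq_finrank_span_row B
  rw [this, hStop, finrank_top, hE]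

end SecAgg
end

section
/- Let 𝔽 be a finite field with q elements, F ∈ 𝔽^{M×K} of the block form [I_M | F̃] with full row rank, G ∈ 𝔽^{N×K}, and r = rank([F; G]). Let V ∈ 𝔽^{(K−r)×(K−M)} be such that the stacked matrix [F; G; [0_{(K−r)×M} | V]] has rank K, and let V⊥ ∈ 𝔽^{(K−M)×(r−M)} have full column rank r−M and satisfy V·V⊥ = 0. On the product space of all pairs (W, S) with W a K×L matrix and S an (r−M)×L matrix over 𝔽, equipped with the uniform probability measure, define N = V⊥·S, define the messages X_1, …, X_K by: rows 1 through M of X are the first M rows of W minus F̃·N, and rows M+1 through K of X are the last K−M rows of W plus N. Then the security constraint holds: the conditional mutual information I[G·W : (X_1, …, X_K) | F·W] = 0. -/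
/-!
Shannon entropy machinery for finitely-supported random variables on a finite
probability space, and the definition of a vector-linear secure aggregation
scheme (Yuan–Sun, "Vector Linear Secure Aggregation").
-/

open scoped BigOperators Classical

namespace SecAggAux

open Finset SecAgg

noncomputable section

/-! ### Entropy of uniform distribution with equal-sized fibers -/

lemma pr_unif {Ω : Type*} [Fintype Ω] {α : Type*} (f : Ω → α) (a : α) :
    pr (fun _ : Ω => (Fintype.card Ω : ℝ)⁻¹) f a
      = ((univ.filter fun ω => f ω = a).card : ℝ) * (Fintype.card Ω : ℝ)⁻¹ := by
  rw [pr, ← Finset.sum_filter, Finset.sum_const, nsmul_eq_mul]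

lemma H_unif {Ω : Type*} [Fintype Ω] {α : Type*} (f : Ω → α) (s : ℕ)
    (hΩ : 0 < Fintype.card Ω) (hs : 0 < s)
    (hfib : ∀ a : α, (∃ ω, f ω = a) → (univ.filter fun ω => f ω = a).card = s) :
    H (fun _ : Ω => (Fintype.card Ω : ℝ)⁻¹) f
      = Real.log (Fintype.card Ω) - Real.log s := by
  classical
  set c : ℝ := (Fintype.card Ω : ℝ) with hc
  have hc0 : 0 < c := by rw [hc]; exact_mod_cast hΩ
  have hs0 : 0 < (s : ℝ) := by exact_mod_cast hs
  have hcard : ((univ.image f).card * s : ℕ) = Fintype.card Ω := by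
    rw [Fintype.card, Finset.card_eq_sum_card_image f univ]
    rw [Finset.sum_congr rfl fun a ha => hfib a (by
      rcases Finset.mem_image.mp ha with ⟨ω, _, hω⟩; exact ⟨ω, hω⟩)]
    rw [Finset.sum_const, smul_eq_mul]
  have key : ((univ.image f).card : ℝ) * ((s : ℝ) * c⁻¹) = 1 := by
    have : ((univ.image f).card : ℝ) * (s : ℝ) = c := by rw [hc]; exact_mod_cast hcard
    field_simp
    linarith [this]
  have hH : H (fun _ : Ω => (Fintype.card Ω : ℝ)⁻¹) f
      = ((univ.image f).card : ℝ) * Real.negMulLog ((s : ℝ) * c⁻¹) := by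
    rw [H, Finset.sum_congr rfl fun a ha => ?_, Finset.sum_const, nsmul_eq_mul]
    rw [pr_unif f a, hfib a (by
      rcases Finset.mem_image.mp ha with ⟨ω, _, hω⟩; exact ⟨ω, hω⟩)]
  rw [hH, Real.negMulLog, Real.log_mul (ne_of_gt hs0) (by positivity), Real.log_inv]
  linear_combination (Real.log c - Real.log (s : ℝ)) * key

lemma fiber_card_eq {Ω : Type*} [Fintype Ω] {α : Type*} [AddCommGroup Ω] [AddCommGroup α]
    (f : Ω → α) (hadd : ∀ x y, f (x + y) = f x + f y) (a : α) (h : ∃ ω, f ω = a) :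
    (univ.filter fun ω => f ω = a).card = Nat.card {ω : Ω // f ω = 0} := by
  classical
  rw [Nat.card_eq_fintype_card]
  obtain ⟨ω₀, h₀⟩ := h
  have hsub : ∀ x y : Ω, f (x - y) = f x - f y := by
    exact fun x y => map_sub (AddMonoidHom.mk' f hadd) x y
  rw [Fintype.card_subtype]
  apply Finset.card_bij (fun ω _ => ω - ω₀)
  · intro ω hω
    simp only [Finset.mem_filter, Finset.mem_univ, true_and] at hω ⊢
    rw [hsub, hω, h₀, sub_self]
  · intro x _ y _ hxy
    exact sub_left_injective hxy
  · intro b hb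
    simp only [Finset.mem_filter, Finset.mem_univ, true_and] at hb
    refine ⟨b + ω₀, ?_, by simp⟩
    simp only [Finset.mem_filter, Finset.mem_univ, true_and]
    rw [hadd, hb, h₀, zero_add]

lemma H_unif_additive {Ω : Type*} [Fintype Ω] {α : Type*} [AddCommGroup Ω] [AddCommGroup α]
    (f : Ω → α) (hadd : ∀ x y, f (x + y) = f x + f y) :
    H (fun _ : Ω => (Fintype.card Ω : ℝ)⁻¹) f
      = Real.log (Fintype.card Ω) - Real.log (Nat.card {ω : Ω // f ω = 0}) := by
  classical
  have h0 : f 0 = 0 := by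
    have := hadd 0 0; simpa using this
  have hpos : 0 < Nat.card {ω : Ω // f ω = 0} := by
    have : Nonempty {ω : Ω // f ω = 0} := ⟨⟨0, h0⟩⟩
    exact Nat.card_pos
  refine H_unif f _ (Fintype.card_pos_iff.mpr ⟨0⟩) hpos ?_
  exact fun a ha => fiber_card_eq f hadd a ha

end

end SecAggAux

namespace SecAggAux2

open Finset Matrix SecAggAux

noncomputable section

variable {𝔽 : Type*} [Field 𝔽] [Fintype 𝔽]

lemma rank_add_finrank_ker {m n : Type*} [Fintype m] [Fintype n]
    (A : Matrix m n 𝔽) :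
    A.rank + Module.finrank 𝔽 (LinearMap.ker A.mulVecLin) = Fintype.card n := by
  rw [Matrix.rank, LinearMap.finrank_range_add_finrank_ker, Module.finrank_pi]

lemma mulVec_inj {m n : Type*} [Fintype m] [Fintype n]
    (A : Matrix m n 𝔽) (h : A.rank = Fintype.card n) :
    ∀ x, A.mulVec x = 0 → x = 0 := by
  have hker : LinearMap.ker A.mulVecLin = ⊥ := by
    have h2 := rank_add_finrank_ker A
    rw [h] at h2
    have h3 : Module.finrank 𝔽 (LinearMap.ker A.mulVecLin) = 0 := by omega
    exact Submodule.finrank_eq_zero.mp h3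
  intro x hx
  have hx' : x ∈ LinearMap.ker A.mulVecLin := by
    simpa [LinearMap.mem_ker, Matrix.mulVecLin_apply] using hx
  rw [hker] at hx'
  simpa using hx'

lemma mul_eq_zero_iff_cols {m n : Type*} [Fintype m] [Fintype n] [DecidableEq m] [DecidableEq n] {L : ℕ}
    (A : Matrix m n 𝔽) (W : Matrix n (Fin L) 𝔽) :
    A * W = 0 ↔ ∀ j, A.mulVec (fun k => W k j) = 0 := by
  constructor
  · intro h j; ext i
    have := congrFun (congrFun h i) j
    simpa [Matrix.mul_apply, Matrix.mulVec, dotProduct] using this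
  · intro h; ext i j
    have := congrFun (h j) i
    simpa [Matrix.mul_apply, Matrix.mulVec, dotProduct] using this

lemma mat_mul_inj {m n : Type*} [Fintype m] [Fintype n] [DecidableEq m] [DecidableEq n] {L : ℕ}
    (A : Matrix m n 𝔽) (h : ∀ x, A.mulVec x = 0 → x = 0)
    (S : Matrix n (Fin L) 𝔽) (hS : A * S = 0) : S = 0 := by
  ext k j
  have := congrFun (h _ (((mul_eq_zero_iff_cols A S).mp hS) j)) k
  simpa using this

lemma card_matrix_ker {m n : Type*} [Fintype m] [Fintype n] [DecidableEq m] [DecidableEq n] {L : ℕ} (A : Matrix m n 𝔽) :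
    Fintype.card {W : Matrix n (Fin L) 𝔽 // A * W = 0}
      = Fintype.card {x : n → 𝔽 // A.mulVec x = 0} ^ L := by
  classical
  rw [← Fintype.card_fin L, ← Fintype.card_fun, Fintype.card_fin]
  apply Fintype.card_congr
  exact ⟨fun x j => ⟨fun k => x.1 k j, ((mul_eq_zero_iff_cols A x.1).mp x.2) j⟩,
    fun g => ⟨fun k j => (g j).1 k,
      (mul_eq_zero_iff_cols A _).mpr fun j => (g j).2⟩,
    fun x => rfl, fun g => rfl⟩

lemma card_vec_ker {m n : Type*} [Fintype m] [Fintype n] [DecidableEq m] [DecidableEq n] (A : Matrix m n 𝔽) :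
    Fintype.card {x : n → 𝔽 // A.mulVec x = 0}
      = Fintype.card 𝔽 ^ Module.finrank 𝔽 (LinearMap.ker A.mulVecLin) := by
  classical
  have e : {x : n → 𝔽 // A.mulVec x = 0} ≃ LinearMap.ker A.mulVecLin :=
    Equiv.subtypeEquivRight (fun x => by
      simp [LinearMap.mem_ker, Matrix.mulVecLin_apply])
  rw [Fintype.card_congr e]
  exact Module.card_eq_pow_finrank

lemma rank_fromColumns_one {M K' : ℕ} (Ft : Matrix (Fin M) (Fin K') 𝔽) :
    (Matrix.fromCols (1 : Matrix (Fin M) (Fin M) 𝔽) Ft).rank = M := by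
  rw [Matrix.rank]
  have htop : LinearMap.range (Matrix.fromCols
      (1 : Matrix (Fin M) (Fin M) 𝔽) Ft).mulVecLin = ⊤ := by
    rw [LinearMap.range_eq_top]
    intro b
    exact ⟨Sum.elim b 0, by
      simp [Matrix.mulVecLin_apply, Matrix.fromCols_mulVec_sumElim,
        Matrix.one_mulVec, Matrix.mulVec_zero]⟩
  rw [htop, finrank_top, Module.finrank_pi, Fintype.card_fin]

lemma le_rank_fromRows {M K' N' : ℕ} (Ft : Matrix (Fin M) (Fin K') 𝔽)
    (G : Matrix (Fin N') (Fin M ⊕ Fin K') 𝔽) :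
    M ≤ (Matrix.fromRows (Matrix.fromCols 1 Ft) G).rank := by
  set T := Matrix.fromRows (Matrix.fromCols (1 : Matrix (Fin M) (Fin M) 𝔽) Ft) G with hT
  set proj : ((Fin M ⊕ Fin N') → 𝔽) →ₗ[𝔽] (Fin M → 𝔽) := LinearMap.funLeft 𝔽 𝔽 Sum.inl with hproj
  have hmap : Submodule.map proj (LinearMap.range T.mulVecLin) = ⊤ := by
    rw [Submodule.eq_top_iff']
    intro b
    refine ⟨T.mulVec (Sum.elim b 0), ⟨Sum.elim b 0, rfl⟩, ?_⟩
    ext i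
    simp [hproj, hT, LinearMap.funLeft, Matrix.fromRows_mulVec,
      Matrix.fromCols_mulVec_sumElim, Matrix.one_mulVec, Matrix.mulVec_zero]
  calc M = Module.finrank 𝔽 (⊤ : Submodule 𝔽 (Fin M → 𝔽)) := by
        rw [finrank_top, Module.finrank_pi, Fintype.card_fin]
    _ = Module.finrank 𝔽 (Submodule.map proj (LinearMap.range T.mulVecLin)) := by rw [hmap]
    _ ≤ Module.finrank 𝔽 (LinearMap.range T.mulVecLin) := Submodule.finrank_map_le _ _
    _ = T.rank := rfl

lemma fromRows_eq_zero_iff {m₁ m₂ n : Type*} {R : Type*} [Zero R]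
    {A : Matrix m₁ n R} {B : Matrix m₂ n R} :
    Matrix.fromRows A B = 0 ↔ A = 0 ∧ B = 0 := by
  constructor
  · intro h
    constructor
    · ext i j; exact congrFun (congrFun h (Sum.inl i)) j
    · ext i j; exact congrFun (congrFun h (Sum.inr i)) j
  · rintro ⟨rfl, rfl⟩
    ext (i | i) j <;> rfl

lemma fromRows_add {m₁ m₂ n : Type*} {R : Type*} [Add R]
    (A B : Matrix m₁ n R) (C D : Matrix m₂ n R) :
    Matrix.fromRows A C + Matrix.fromRows B D = Matrix.fromRows (A + B) (C + D) := by
  ext (i | i) j <;> rfl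

lemma card_subtype_fst {α β : Type*} [Fintype α] [Fintype β] (P : α → Prop) :
    Fintype.card {x : α × β // P x.1} = Fintype.card {a : α // P a} * Fintype.card β := by
  classical
  rw [← Fintype.card_prod]
  exact Fintype.card_congr
    ⟨fun x => (⟨x.1.1, x.2⟩, x.1.2), fun y => ⟨(y.1.1, y.2), y.1.2⟩,
      fun x => rfl, fun y => rfl⟩

lemma card_matrix (m n : Type*) [Fintype m] [Fintype n] [DecidableEq m] [DecidableEq n] :
    Fintype.card (Matrix m n 𝔽) = Fintype.card 𝔽 ^ (Fintype.card n * Fintype.card m) := by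
  classical
  rw [show Fintype.card (Matrix m n 𝔽) = Fintype.card (m → n → 𝔽) from
    Fintype.card_congr (Equiv.refl _), Fintype.card_fun, Fintype.card_fun, ← pow_mul]

end

end SecAggAux2

namespace SecAggAux2

noncomputable section

variable {𝔽 : Type*} [Field 𝔽] [Fintype 𝔽]

lemma submatrix_inl_fromRows {m₁ m₂ n : Type*} {R : Type*}
    (A : Matrix m₁ n R) (B : Matrix m₂ n R) :
    (Matrix.fromRows A B).submatrix Sum.inl id = A := rfl

lemma submatrix_inr_fromRows {m₁ m₂ n : Type*} {R : Type*}
    (A : Matrix m₁ n R) (B : Matrix m₂ n R) :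
    (Matrix.fromRows A B).submatrix Sum.inr id = B := rfl

lemma eq_fromRows_submatrix {m₁ m₂ n : Type*} {R : Type*} (A : Matrix (m₁ ⊕ m₂) n R) :
    A = Matrix.fromRows (A.submatrix Sum.inl id) (A.submatrix Sum.inr id) :=
  (Matrix.fromRows_toRows A).symm

lemma submatrix_add' {l m n o : Type*} {R : Type*} [Add R] (A B : Matrix m n R)
    (r : l → m) (c : o → n) :
    (A + B).submatrix r c = A.submatrix r c + B.submatrix r c := rfl

lemma key_inj {M K' N r : ℕ}
    (Ft : Matrix (Fin M) (Fin K') 𝔽) (G : Matrix (Fin N) (Fin M ⊕ Fin K') 𝔽)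
    (V : Matrix (Fin (M + K' - r)) (Fin K') 𝔽)
    (hV : (Matrix.fromRows (Matrix.fromRows (Matrix.fromCols 1 Ft) G)
        (Matrix.fromCols (0 : Matrix (Fin (M + K' - r)) (Fin M) 𝔽) V)).rank = M + K')
    (Vp : Matrix (Fin K') (Fin (r - M)) 𝔽) (hVp : Vp.rank = r - M) (hVVp : V * Vp = 0) :
    ∀ s, ((G.toCols₁ * Ft - G.toCols₂) * Vp).mulVec s = 0 → s = 0 := by
  intro s hs
  set y := Vp.mulVec s with hy
  have hy0 : (G.toCols₁ * Ft - G.toCols₂).mulVec y = 0 := by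
    rw [hy, Matrix.mulVec_mulVec]; exact hs
  have hVy : V.mulVec y = 0 := by
    rw [hy, Matrix.mulVec_mulVec, hVVp, Matrix.zero_mulVec]
  set A := Matrix.fromRows (Matrix.fromRows (Matrix.fromCols
      (1 : Matrix (Fin M) (Fin M) 𝔽) Ft) G)
      (Matrix.fromCols (0 : Matrix (Fin (M + K' - r)) (Fin M) 𝔽) V) with hA
  set x : Fin M ⊕ Fin K' → 𝔽 := Sum.elim (-(Ft.mulVec y)) y with hx
  have h1 : (Matrix.fromCols (1 : Matrix (Fin M) (Fin M) 𝔽) Ft).mulVec x = 0 := by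
    rw [hx, Matrix.fromCols_mulVec_sumElim, Matrix.one_mulVec]
    exact neg_add_cancel _
  have h2 : G.mulVec x = 0 := by
    conv_lhs => rw [← Matrix.fromCols_toCols G]
    rw [hx, Matrix.fromCols_mulVec_sumElim, Matrix.mulVec_neg, Matrix.mulVec_mulVec]
    rw [Matrix.sub_mulVec, sub_eq_zero] at hy0
    rw [hy0]
    exact neg_add_cancel _
  have h3 : (Matrix.fromCols (0 : Matrix (Fin (M + K' - r)) (Fin M) 𝔽) V).mulVec x = 0 := by
    rw [hx, Matrix.fromCols_mulVec_sumElim, Matrix.zero_mulVec, hVy, add_zero]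
  have hAx : A.mulVec x = 0 := by
    rw [hA, Matrix.fromRows_mulVec, Matrix.fromRows_mulVec, h1, h2, h3]
    ext ((i | i) | i) <;> simp
  have hxz : x = 0 := by
    refine mulVec_inj A ?_ x hAx
    rw [hV]
    simp [Fintype.card_sum]
  have hyz : y = 0 := funext fun k => congrFun hxz (Sum.inr k)
  exact mulVec_inj Vp (by rw [hVp, Fintype.card_fin]) s (by rw [← hy]; exact hyz)

end

end SecAggAux2

namespace SecAggAux2

open SecAggAux SecAgg

noncomputable section

lemma H_unif_additive' {Ω : Type*} [Fintype Ω] {α : Type*} [AddCommGroup Ω] [AddCommGroup α]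
    (f : Ω → α) (hadd : ∀ x y, f (x + y) = f x + f y) (k : ℕ)
    (hk : Nat.card {ω : Ω // f ω = 0} = k) :
    H (fun _ : Ω => (Fintype.card Ω : ℝ)⁻¹) f
      = Real.log (Fintype.card Ω) - Real.log k := by
  rw [← hk]
  exact H_unif_additive f hadd

def subtypeFstEquiv {α β : Type*} (P : α → Prop) :
    {x : α × β // P x.1} ≃ ({a : α // P a} × β) where
  toFun x := (⟨x.1.1, x.2⟩, x.1.2)
  invFun y := ⟨(y.1.1, y.2), y.1.2⟩
  left_inv x := rfl
  right_inv y := rfl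

lemma submatrix_zero' {l m n o : Type*} {R : Type*} [Zero R]
    (r : l → m) (c : o → n) : (0 : Matrix m n R).submatrix r c = 0 := rfl

end

end SecAggAux2

namespace SecAgg

open SecAggAux SecAggAux2 in
set_option maxHeartbeats 2000000 in
/-- **Security of the general achievable scheme.** With `F = [I_M | F̃]`,
`r = rank [F; G]`, a completion matrix `V` making `[F; G; [0 | V]]` full rank,
and `V⊥` of full column rank `r − M` with `V · V⊥ = 0`, the scheme on the
uniform space of pairs `(W, S)` with noise `N = V⊥ · S` and messages
`X_top = W_top − F̃·N`, `X_bot = W_bot + N` satisfies the security constraint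
`I[G·W : X | F·W] = 0`. -/
theorem achievable_scheme_secure
    {𝔽 : Type} [Field 𝔽] [Fintype 𝔽] {M K' N L r : ℕ}
    (Ft : Matrix (Fin M) (Fin K') 𝔽) (G : Matrix (Fin N) (Fin M ⊕ Fin K') 𝔽)
    (hr : r = (Matrix.fromRows (Matrix.fromCols 1 Ft) G).rank)
    (V : Matrix (Fin (M + K' - r)) (Fin K') 𝔽)
    (hV : (Matrix.fromRows (Matrix.fromRows (Matrix.fromCols 1 Ft) G)
        (Matrix.fromCols (0 : Matrix (Fin (M + K' - r)) (Fin M) 𝔽) V)).rank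
          = M + K')
    (Vp : Matrix (Fin K') (Fin (r - M)) 𝔽)
    (hVp : Vp.rank = r - M)
    (hVVp : V * Vp = 0) :
    CMI
      (fun _ : Matrix (Fin M ⊕ Fin K') (Fin L) 𝔽 × Matrix (Fin (r - M)) (Fin L) 𝔽 =>
        (Fintype.card
          (Matrix (Fin M ⊕ Fin K') (Fin L) 𝔽 × Matrix (Fin (r - M)) (Fin L) 𝔽) : ℝ)⁻¹)
      (fun ω => G * ω.1)
      (fun ω => Matrix.fromRows
          (ω.1.submatrix Sum.inl id - Ft * (Vp * ω.2))
          (ω.1.submatrix Sum.inr id + Vp * ω.2))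
      (fun ω => (Matrix.fromCols 1 Ft) * ω.1) = 0 := by
  classical
  have hq0 : 0 < Fintype.card 𝔽 := Fintype.card_pos
  have hMle : M ≤ r := hr ▸ le_rank_fromRows Ft G
  -- dimension of the kernel of the stacked matrix [F; G]
  obtain ⟨dT, hdT⟩ : ∃ dT, Module.finrank 𝔽 (LinearMap.ker
      (Matrix.fromRows (Matrix.fromCols (1 : Matrix (Fin M) (Fin M) 𝔽) Ft)
        G).mulVecLin) = dT := ⟨_, rfl⟩
  have hdTsum : r + dT = M + K' := by
    have h := rank_add_finrank_ker
      (Matrix.fromRows (Matrix.fromCols (1 : Matrix (Fin M) (Fin M) 𝔽) Ft) G)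
    rw [hdT, ← hr] at h
    simpa [Fintype.card_sum] using h
  -- dimension of the kernel of F
  have hdF : Module.finrank 𝔽 (LinearMap.ker
      (Matrix.fromCols (1 : Matrix (Fin M) (Fin M) 𝔽) Ft).mulVecLin) = K' := by
    have h := rank_add_finrank_ker (Matrix.fromCols (1 : Matrix (Fin M) (Fin M) 𝔽) Ft)
    rw [rank_fromColumns_one] at h
    simp only [Fintype.card_sum, Fintype.card_fin] at h
    omega
  have hcS : Fintype.card (Matrix (Fin (r - M)) (Fin L) 𝔽) = Fintype.card 𝔽 ^ (L * (r - M)) := by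
    rw [show Fintype.card (Matrix (Fin (r - M)) (Fin L) 𝔽)
        = Fintype.card (Fin (r - M) → Fin L → 𝔽) from Fintype.card_congr (Equiv.refl _),
      Fintype.card_fun, Fintype.card_fun, ← pow_mul]
    simp [Fintype.card_fin]
  -- additivity of the message map
  have haddY : ∀ a b : Matrix (Fin M ⊕ Fin K') (Fin L) 𝔽 × Matrix (Fin (r - M)) (Fin L) 𝔽,
      Matrix.fromRows ((a + b).1.submatrix Sum.inl id - Ft * (Vp * (a + b).2))
          ((a + b).1.submatrix Sum.inr id + Vp * (a + b).2)
        = Matrix.fromRows (a.1.submatrix Sum.inl id - Ft * (Vp * a.2))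
            (a.1.submatrix Sum.inr id + Vp * a.2)
          + Matrix.fromRows (b.1.submatrix Sum.inl id - Ft * (Vp * b.2))
            (b.1.submatrix Sum.inr id + Vp * b.2) := by
    intro a b
    simp only [Prod.fst_add, Prod.snd_add, submatrix_add', Matrix.mul_add, fromRows_add]
    congr 1 <;> abel
  -- kernel cardinalities
  have hc1 : Nat.card {ω : Matrix (Fin M ⊕ Fin K') (Fin L) 𝔽 × Matrix (Fin (r - M)) (Fin L) 𝔽 //
        (G * ω.1, Matrix.fromCols 1 Ft * ω.1) = 0}
      = Fintype.card 𝔽 ^ (dT * L) * Fintype.card 𝔽 ^ (L * (r - M)) := by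
    rw [Nat.card_eq_fintype_card]
    have e : {ω : Matrix (Fin M ⊕ Fin K') (Fin L) 𝔽 × Matrix (Fin (r - M)) (Fin L) 𝔽 //
          (G * ω.1, Matrix.fromCols 1 Ft * ω.1) = 0}
        ≃ {ω : Matrix (Fin M ⊕ Fin K') (Fin L) 𝔽 × Matrix (Fin (r - M)) (Fin L) 𝔽 //
          Matrix.fromRows (Matrix.fromCols 1 Ft) G * ω.1 = 0} :=
      Equiv.subtypeEquivRight (fun ω => by
        rw [Prod.mk_eq_zero, Matrix.fromRows_mul, fromRows_eq_zero_iff]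
        tauto)
    rw [Fintype.card_congr (e.trans (subtypeFstEquiv
        (fun W : Matrix (Fin M ⊕ Fin K') (Fin L) 𝔽 =>
          Matrix.fromRows (Matrix.fromCols 1 Ft) G * W = 0))), Fintype.card_prod,
      card_matrix_ker, card_vec_ker, hdT, hcS, ← pow_mul]
  -- the four entropy computations
  have hH1 := H_unif_additive'
    (f := fun ω : Matrix (Fin M ⊕ Fin K') (Fin L) 𝔽 × Matrix (Fin (r - M)) (Fin L) 𝔽 =>
      (G * ω.1, Matrix.fromCols 1 Ft * ω.1))
    (by intro a b; simp [Prod.ext_iff, Matrix.mul_add]; exact Matrix.mul_add (Matrix.fromCols (1 : Matrix (Fin M) (Fin M) 𝔽) Ft) a.1 b.1)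
    (Fintype.card 𝔽 ^ (dT * L) * Fintype.card 𝔽 ^ (L * (r - M)))
    hc1
  have hH2 := H_unif_additive'
    (f := fun ω : Matrix (Fin M ⊕ Fin K') (Fin L) 𝔽 × Matrix (Fin (r - M)) (Fin L) 𝔽 =>
      (Matrix.fromRows (ω.1.submatrix Sum.inl id - Ft * (Vp * ω.2))
        (ω.1.submatrix Sum.inr id + Vp * ω.2), Matrix.fromCols 1 Ft * ω.1))
    (fun a b => Prod.ext (by exact haddY a b) (by exact Matrix.mul_add (Matrix.fromCols (1 : Matrix (Fin M) (Fin M) 𝔽) Ft) a.1 b.1))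
    (Fintype.card 𝔽 ^ (L * (r - M)))
    (by
      have e : {ω : Matrix (Fin M ⊕ Fin K') (Fin L) 𝔽 × Matrix (Fin (r - M)) (Fin L) 𝔽 //
            (Matrix.fromRows (ω.1.submatrix Sum.inl id - Ft * (Vp * ω.2))
              (ω.1.submatrix Sum.inr id + Vp * ω.2), Matrix.fromCols 1 Ft * ω.1) = 0}
          ≃ Matrix (Fin (r - M)) (Fin L) 𝔽 := by
        refine ⟨fun x => x.1.2, fun S => ⟨(Matrix.fromRows (Ft * (Vp * S)) (-(Vp * S)), S), ?_⟩,
          ?_, fun S => rfl⟩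
        · have c1 : Matrix.fromRows
              ((Matrix.fromRows (Ft * (Vp * S)) (-(Vp * S))).submatrix Sum.inl id
                - Ft * (Vp * S))
              ((Matrix.fromRows (Ft * (Vp * S)) (-(Vp * S))).submatrix Sum.inr id
                + Vp * S) = 0 := by
            rw [submatrix_inl_fromRows, submatrix_inr_fromRows, sub_self, neg_add_cancel]
            exact fromRows_eq_zero_iff.mpr ⟨rfl, rfl⟩
          have c2 : Matrix.fromCols (1 : Matrix (Fin M) (Fin M) 𝔽) Ft
                * Matrix.fromRows (Ft * (Vp * S)) (-(Vp * S))
              = (0 : Matrix (Fin M) (Fin L) 𝔽) := by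
            rw [Matrix.fromCols_mul_fromRows, Matrix.one_mul, Matrix.mul_neg,
              add_neg_cancel]
          exact Prod.mk_eq_zero.mpr ⟨c1, c2⟩
        · rintro ⟨⟨W, S⟩, h⟩
          obtain ⟨hX, -⟩ := Prod.mk_eq_zero.mp h
          rw [fromRows_eq_zero_iff] at hX
          obtain ⟨h1, h2⟩ := hX
          have hW1 : W.submatrix Sum.inl id = Ft * (Vp * S) := sub_eq_zero.mp h1
          have hW2 : W.submatrix Sum.inr id = -(Vp * S) := eq_neg_of_add_eq_zero_left h2
          apply Subtype.ext
          have hW : Matrix.fromRows (Ft * (Vp * S)) (-(Vp * S)) = W := by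
            rw [← hW1, ← hW2]
            exact (eq_fromRows_submatrix W).symm
          simp [hW]
      rw [Nat.card_eq_fintype_card, Fintype.card_congr e, hcS])
  have hH3 := H_unif_additive'
    (f := fun ω : Matrix (Fin M ⊕ Fin K') (Fin L) 𝔽 × Matrix (Fin (r - M)) (Fin L) 𝔽 =>
      (G * ω.1, Matrix.fromRows (ω.1.submatrix Sum.inl id - Ft * (Vp * ω.2))
        (ω.1.submatrix Sum.inr id + Vp * ω.2), Matrix.fromCols 1 Ft * ω.1))
    (fun a b => Prod.ext (by simp [Matrix.mul_add])
      (by exact Prod.ext (by exact haddY a b) (by exact Matrix.mul_add (Matrix.fromCols (1 : Matrix (Fin M) (Fin M) 𝔽) Ft) a.1 b.1)))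
    1
    (by
      rw [Nat.card_eq_fintype_card, Fintype.card_eq_one_iff]
      refine ⟨⟨0, ?_⟩, ?_⟩
      · simp [Prod.ext_iff, submatrix_zero', fromRows_eq_zero_iff]
        exact Matrix.mul_zero (Matrix.fromCols (1 : Matrix (Fin M) (Fin M) 𝔽) Ft)
      · rintro ⟨ω, hω⟩
        apply Subtype.ext
        rw [Prod.mk_eq_zero, Prod.mk_eq_zero] at hω
        have hG0 := hω.1
        have hX0 := hω.2.1
        rw [fromRows_eq_zero_iff] at hX0
        have hW1 : ω.1.submatrix Sum.inl id = Ft * (Vp * ω.2) := sub_eq_zero.mp hX0.1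
        have hW2 : ω.1.submatrix Sum.inr id = -(Vp * ω.2) := eq_neg_of_add_eq_zero_left hX0.2
        have hGv : (G.toCols₁ * Ft - G.toCols₂) * Vp * ω.2 = 0 := by
          have : (G.toCols₁ * Ft - G.toCols₂) * Vp * ω.2 = G * ω.1 := by
            conv_rhs => rw [eq_fromRows_submatrix ω.1, ← Matrix.fromCols_toCols G]
            rw [Matrix.fromCols_mul_fromRows, hW1, hW2, Matrix.mul_neg]
            simp only [Matrix.sub_mul, Matrix.mul_assoc]
            rw [sub_eq_add_neg]
          rw [this, hG0]
        have hS0 : ω.2 = 0 :=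
          mat_mul_inj _ (key_inj Ft G V hV Vp hVp hVVp) _ hGv
        have hW0 : ω.1 = 0 := by
          conv_lhs => rw [eq_fromRows_submatrix ω.1]
          rw [hW1, hW2, hS0, Matrix.mul_zero, Matrix.mul_zero, neg_zero]
          exact fromRows_eq_zero_iff.mpr ⟨rfl, rfl⟩
        simp [Prod.ext_iff, hW0, hS0])
  have hH4 := H_unif_additive'
    (f := fun ω : Matrix (Fin M ⊕ Fin K') (Fin L) 𝔽 × Matrix (Fin (r - M)) (Fin L) 𝔽 =>
      Matrix.fromCols 1 Ft * ω.1)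
    (by intro a b; exact Matrix.mul_add (Matrix.fromCols (1 : Matrix (Fin M) (Fin M) 𝔽) Ft) a.1 b.1)
    (Fintype.card 𝔽 ^ (K' * L) * Fintype.card 𝔽 ^ (L * (r - M)))
    (by
      rw [Nat.card_eq_fintype_card]
      change Fintype.card {ω : Matrix (Fin M ⊕ Fin K') (Fin L) 𝔽 × Matrix (Fin (r - M)) (Fin L) 𝔽 //
        Matrix.fromCols (1 : Matrix (Fin M) (Fin M) 𝔽) Ft * ω.1 = 0} = _
      rw [Fintype.card_congr (subtypeFstEquiv
          (fun W : Matrix (Fin M ⊕ Fin K') (Fin L) 𝔽 => Matrix.fromCols 1 Ft * W = 0)),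
        Fintype.card_prod, card_matrix_ker, card_vec_ker, hdF, hcS, ← pow_mul])
  simp only [CMI]
  erw [hH1, hH2, hH3, hH4]
  -- the product identity between the four kernel cardinalities
  have hKL : K' * L = dT * L + L * (r - M) := by
    have hK : K' = dT + (r - M) := by omega
    rw [hK]; ring
  have hprod : (Fintype.card 𝔽 ^ (dT * L) * Fintype.card 𝔽 ^ (L * (r - M))) * Fintype.card 𝔽 ^ (L * (r - M))
      = 1 * (Fintype.card 𝔽 ^ (K' * L) * Fintype.card 𝔽 ^ (L * (r - M))) := by
    rw [one_mul, ← pow_add, ← pow_add, ← pow_add]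
    congr 1
    omega
  have hp1 : (0:ℝ) < ((Fintype.card 𝔽 ^ (dT * L) * Fintype.card 𝔽 ^ (L * (r - M)) : ℕ) : ℝ) := by
    exact_mod_cast Nat.mul_pos (pow_pos hq0 _) (pow_pos hq0 _)
  have hp2 : (0:ℝ) < ((Fintype.card 𝔽 ^ (L * (r - M)) : ℕ) : ℝ) := by
    exact_mod_cast pow_pos hq0 _
  have hp3 : (0:ℝ) < ((1 : ℕ) : ℝ) := by norm_num
  have hp4 : (0:ℝ) < ((Fintype.card 𝔽 ^ (K' * L) * Fintype.card 𝔽 ^ (L * (r - M)) : ℕ) : ℝ) := by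
    exact_mod_cast Nat.mul_pos (pow_pos hq0 _) (pow_pos hq0 _)
  have hlog : Real.log ((Fintype.card 𝔽 ^ (dT * L) * Fintype.card 𝔽 ^ (L * (r - M)) : ℕ) : ℝ)
        + Real.log ((Fintype.card 𝔽 ^ (L * (r - M)) : ℕ) : ℝ)
      = Real.log ((1 : ℕ) : ℝ)
        + Real.log ((Fintype.card 𝔽 ^ (K' * L) * Fintype.card 𝔽 ^ (L * (r - M)) : ℕ) : ℝ) := by
    rw [← Real.log_mul hp1.ne' hp2.ne', ← Real.log_mul hp3.ne' hp4.ne']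
    congr 1
    exact_mod_cast hprod
  linarith


end SecAgg
end

section
/- Let 𝔽 = F_5 (the field with 5 elements), K = 3, and consider the secure aggregation problem with F the 1×3 row vector (1, 1, 1) and G the 1×3 row vector (1, 2, 3). For any secure aggregation scheme for (F, G), the individual key entropies satisfy H[Z_1] + H[Z_2] ≥ L · log 5; in particular max(H[Z_1], H[Z_2]) ≥ (L/2) · log 5, so the individual key rate is at least 1/2. -/
/-!
Shannon entropy machinery for finitely-supported random variables on a finite
probability space, and the definition of a vector-linear secure aggregation
scheme (Yuan–Sun, "Vector Linear Secure Aggregation").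
-/

open scoped BigOperators Classical

namespace SecAgg

instance : Fact (Nat.Prime 5) := ⟨by norm_num⟩

section Lemmas
variable {Ω : Type*} [Fintype Ω] {α β γ : Type*} {p : Ω → ℝ}

lemma pr_nonneg (hp : ∀ ω, 0 ≤ p ω) (X : Ω → α) (a : α) : 0 ≤ pr p X a :=
  Finset.sum_nonneg fun ω _ => by by_cases h : X ω = a <;> simp [pr, h, hp ω]

lemma pr_congr {X Y : Ω → α} (h : ∀ ω, p ω ≠ 0 → X ω = Y ω) (a : α) :
    pr p X a = pr p Y a := by
  refine Finset.sum_congr rfl fun ω _ => ?_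
  by_cases hω : p ω = 0
  · simp [hω]
  · rw [h ω hω]

lemma pr_eq_zero_of_not_mem_image (X : Ω → α) {a : α}
    (ha : a ∉ Finset.univ.image X) : pr p X a = 0 := by
  refine Finset.sum_eq_zero fun ω _ => ?_
  have : X ω ≠ a := fun h => ha (by simp [← h, Finset.mem_image])
  simp [this]

lemma pr_pos (hp : ∀ ω, 0 ≤ p ω) {X : Ω → α} {ω₀ : Ω} (h0 : p ω₀ ≠ 0) :
    0 < pr p X (X ω₀) := by
  have : ∀ ω ∈ Finset.univ, 0 ≤ (if X ω = X ω₀ then p ω else 0) := fun ω _ => by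
    by_cases h : X ω = X ω₀ <;> simp [h, hp ω]
  have h1 : (if X ω₀ = X ω₀ then p ω₀ else 0) ≤ pr p X (X ω₀) :=
    Finset.single_le_sum this (Finset.mem_univ ω₀)
  simp only [if_pos rfl] at h1
  exact lt_of_lt_of_le (lt_of_le_of_ne (hp ω₀) (Ne.symm h0)) h1

lemma exists_omega_of_pr_pos {X : Ω → α} {a : α} (h : 0 < pr p X a) :
    ∃ ω, p ω ≠ 0 ∧ X ω = a := by
  by_contra hc
  push_neg at hc
  have : pr p X a = 0 := Finset.sum_eq_zero fun ω _ => by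
    by_cases hX : X ω = a
    · by_cases hp : p ω = 0
      · simp [hX, hp]
      · exact absurd hX (hc ω hp)
    · simp [hX]
  linarith

lemma H_eq_sum_subset {X : Ω → α} {s : Finset α} (hs : Finset.univ.image X ⊆ s) :
    H p X = ∑ a ∈ s, Real.negMulLog (pr p X a) := by
  refine Finset.sum_subset hs fun a _ ha => ?_
  rw [pr_eq_zero_of_not_mem_image X ha, Real.negMulLog_zero]

lemma sum_pr_subset {X : Ω → α} {s : Finset α} (hs : Finset.univ.image X ⊆ s) :
    ∑ a ∈ s, pr p X a = ∑ ω, p ω := by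
  unfold pr
  rw [Finset.sum_comm]
  refine Finset.sum_congr rfl fun ω _ => ?_
  rw [Finset.sum_ite_eq s (X ω) (fun _ => p ω)]
  simp [hs (Finset.mem_image_of_mem X (Finset.mem_univ ω))]

-- marginal over second component
lemma marginal_snd {U : Ω → α} {V : Ω → β} {t : Finset β}
    (ht : Finset.univ.image V ⊆ t) (u : α) :
    pr p U u = ∑ v ∈ t, pr p (fun ω => (U ω, V ω)) (u, v) := by
  unfold pr
  rw [Finset.sum_comm]
  refine Finset.sum_congr rfl fun ω _ => ?_
  by_cases hU : U ω = u
  · rw [if_pos hU]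
    have hVt : V ω ∈ t := ht (Finset.mem_image_of_mem V (Finset.mem_univ ω))
    calc p ω = ∑ v ∈ t, if V ω = v then p ω else 0 := by
          rw [Finset.sum_ite_eq t (V ω) (fun _ => p ω)]; simp [hVt]
      _ = _ := by
          refine Finset.sum_congr rfl fun v _ => ?_
          by_cases hV : V ω = v <;> simp [hV, hU, Prod.ext_iff]
  · rw [if_neg hU]
    refine (Finset.sum_eq_zero fun v _ => ?_).symm
    simp [Prod.ext_iff, hU]

lemma marginal_fst {U : Ω → α} {V : Ω → β} {s : Finset α}
    (hs : Finset.univ.image U ⊆ s) (v : β) :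
    pr p V v = ∑ u ∈ s, pr p (fun ω => (U ω, V ω)) (u, v) := by
  unfold pr
  rw [Finset.sum_comm]
  refine Finset.sum_congr rfl fun ω _ => ?_
  by_cases hV : V ω = v
  · rw [if_pos hV]
    have hUs : U ω ∈ s := hs (Finset.mem_image_of_mem U (Finset.mem_univ ω))
    calc p ω = ∑ u ∈ s, if U ω = u then p ω else 0 := by
          rw [Finset.sum_ite_eq s (U ω) (fun _ => p ω)]; simp [hUs]
      _ = _ := by
          refine Finset.sum_congr rfl fun u _ => ?_
          by_cases hU : U ω = u <;> simp [hU, hV, Prod.ext_iff]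
  · rw [if_neg hV]
    refine (Finset.sum_eq_zero fun u _ => ?_).symm
    simp [Prod.ext_iff, hV]

lemma negMulLog_add_le {a b : ℝ} (ha : 0 ≤ a) (hb : 0 ≤ b) :
    Real.negMulLog (a + b) ≤ Real.negMulLog a + Real.negMulLog b := by
  rcases eq_or_lt_of_le ha with h | ha'
  · simp [← h]
  rcases eq_or_lt_of_le hb with h | hb'
  · simp [← h]
  have h1 : Real.log a ≤ Real.log (a + b) := Real.log_le_log ha' (by linarith)
  have h2 : Real.log b ≤ Real.log (a + b) := Real.log_le_log hb' (by linarith)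
  simp only [Real.negMulLog, neg_mul]
  nlinarith

lemma negMulLog_add_lt {a b : ℝ} (ha : 0 < a) (hb : 0 < b) :
    Real.negMulLog (a + b) < Real.negMulLog a + Real.negMulLog b := by
  have h1 : Real.log a < Real.log (a + b) := Real.log_lt_log ha (by linarith)
  have h2 : Real.log b ≤ Real.log (a + b) := Real.log_le_log hb (by linarith)
  simp only [Real.negMulLog, neg_mul]
  nlinarith

lemma negMulLog_sum_le {ι : Type*} {s : Finset ι} {f : ι → ℝ}
    (hf : ∀ i ∈ s, 0 ≤ f i) :
    Real.negMulLog (∑ i ∈ s, f i) ≤ ∑ i ∈ s, Real.negMulLog (f i) := by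
  classical
  induction s using Finset.induction_on with
  | empty => simp
  | @insert a s' hx ih =>
    rw [Finset.sum_insert hx, Finset.sum_insert hx]
    have h1 := negMulLog_add_le (hf a (Finset.mem_insert_self a s'))
      (Finset.sum_nonneg fun i hi => hf i (Finset.mem_insert_of_mem hi))
    have h2 := ih (fun i hi => hf i (Finset.mem_insert_of_mem hi))
    linarith

lemma negMulLog_sum_lt {ι : Type*} {s : Finset ι} {f : ι → ℝ}
    (hf : ∀ i ∈ s, 0 ≤ f i) {i₁ i₂ : ι} (h1 : i₁ ∈ s) (h2 : i₂ ∈ s)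
    (hne : i₁ ≠ i₂) (hp1 : 0 < f i₁) (hp2 : 0 < f i₂) :
    Real.negMulLog (∑ i ∈ s, f i) < ∑ i ∈ s, Real.negMulLog (f i) := by
  classical
  have hins : s = insert i₁ (s.erase i₁) := (Finset.insert_erase h1).symm
  have h2' : i₂ ∈ s.erase i₁ := Finset.mem_erase.2 ⟨hne.symm, h2⟩
  have hrest_nonneg : ∀ i ∈ s.erase i₁, 0 ≤ f i := fun i hi =>
    hf i (Finset.mem_of_mem_erase hi)
  have hrest_pos : 0 < ∑ i ∈ s.erase i₁, f i :=
    Finset.sum_pos' hrest_nonneg ⟨i₂, h2', hp2⟩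
  rw [hins, Finset.sum_insert (Finset.notMem_erase i₁ s),
    Finset.sum_insert (Finset.notMem_erase i₁ s)]
  calc Real.negMulLog (f i₁ + ∑ i ∈ s.erase i₁, f i)
      < Real.negMulLog (f i₁) + Real.negMulLog (∑ i ∈ s.erase i₁, f i) :=
        negMulLog_add_lt hp1 hrest_pos
    _ ≤ _ := by linarith [negMulLog_sum_le hrest_nonneg]

lemma H_congr_supp {U U' : Ω → α} (h : ∀ ω, p ω ≠ 0 → U ω = U' ω) :
    H p U = H p U' := by
  have hpr : ∀ a, pr p U a = pr p U' a := pr_congr h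
  rw [H_eq_sum_subset (s := Finset.univ.image U ∪ Finset.univ.image U')
    Finset.subset_union_left,
    H_eq_sum_subset (s := Finset.univ.image U ∪ Finset.univ.image U')
    Finset.subset_union_right]
  exact Finset.sum_congr rfl fun a _ => by rw [hpr a]

lemma pr_comp_inj {U : Ω → α} {ψ : α → β} (hψ : Function.Injective ψ) (a : α) :
    pr p (fun ω => ψ (U ω)) (ψ a) = pr p U a := by
  refine Finset.sum_congr rfl fun ω _ => ?_
  by_cases h : U ω = a
  · simp [h]
  · rw [if_neg h, if_neg (fun hc => h (hψ hc))]

lemma H_comp_inj {U : Ω → α} {ψ : α → β} (hψ : Function.Injective ψ) :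
    H p (fun ω => ψ (U ω)) = H p U := by
  unfold H
  have himg : Finset.univ.image (fun ω => ψ (U ω)) = (Finset.univ.image U).image ψ := by
    ext b; simp [Finset.mem_image]
  rw [himg, Finset.sum_image (fun a _ a' _ h => hψ h)]
  exact Finset.sum_congr rfl fun a _ => by rw [pr_comp_inj hψ]

lemma H_pair_swap (U : Ω → α) (V : Ω → β) :
    H p (fun ω => (U ω, V ω)) = H p (fun ω => (V ω, U ω)) := by
  have := H_comp_inj (p := p) (U := fun ω => (U ω, V ω))
    (ψ := Prod.swap) (fun a b h => by simpa using (Prod.swap_injective h))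
  simpa using this.symm

/-- grouping identity -/
lemma H_pair_eq_double_sum (U : Ω → α) (V : Ω → β) :
    H p (fun ω => (U ω, V ω)) =
      ∑ u ∈ Finset.univ.image U, ∑ v ∈ Finset.univ.image V,
        Real.negMulLog (pr p (fun ω => (U ω, V ω)) (u, v)) := by
  rw [H_eq_sum_subset (s := Finset.univ.image U ×ˢ Finset.univ.image V)
    (by
      intro x hx
      simp only [Finset.mem_image] at hx
      obtain ⟨ω, _, rfl⟩ := hx
      exact Finset.mk_mem_product (Finset.mem_image_of_mem U (Finset.mem_univ ω))
        (Finset.mem_image_of_mem V (Finset.mem_univ ω)))]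
  rw [Finset.sum_product]

lemma H_snd_le_H_pair (hp : ∀ ω, 0 ≤ p ω) (U : Ω → α) (V : Ω → β) :
    H p V ≤ H p (fun ω => (U ω, V ω)) := by
  rw [H_pair_eq_double_sum, Finset.sum_comm]
  unfold H
  refine Finset.sum_le_sum fun v _ => ?_
  rw [marginal_fst (p := p) (U := U) (V := V) (s := Finset.univ.image U)
    (le_refl _) v]
  exact negMulLog_sum_le fun u _ => pr_nonneg hp _ _

lemma H_fst_le_H_pair (hp : ∀ ω, 0 ≤ p ω) (U : Ω → α) (V : Ω → β) :
    H p U ≤ H p (fun ω => (U ω, V ω)) := by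
  rw [H_pair_swap]; exact H_snd_le_H_pair hp V U

lemma H_comp_le (hp : ∀ ω, 0 ≤ p ω) (U : Ω → α) (ψ : α → β) :
    H p (fun ω => ψ (U ω)) ≤ H p U := by
  have h1 : H p (fun ω => ψ (U ω)) ≤ H p (fun ω => (U ω, ψ (U ω))) :=
    H_snd_le_H_pair hp U (fun ω => ψ (U ω))
  have h2 : H p (fun ω => (U ω, ψ (U ω))) = H p U :=
    H_comp_inj (ψ := fun u => (u, ψ u)) (fun a b h => congrArg Prod.fst h)
  linarith

/-- if `V` is a function of `U` on the support, the pair has the entropy of `U` -/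
lemma H_pair_of_fn {U : Ω → α} {V : Ω → β} {f : α → β}
    (h : ∀ ω, p ω ≠ 0 → V ω = f (U ω)) :
    H p (fun ω => (U ω, V ω)) = H p U := by
  have h1 : H p (fun ω => (U ω, V ω)) = H p (fun ω => (U ω, f (U ω))) :=
    H_congr_supp fun ω hω => by rw [h ω hω]
  rw [h1]
  exact H_comp_inj (ψ := fun u => (u, f u)) (fun a b hab => congrArg Prod.fst hab)

lemma exists_fn_of_congr [Nonempty β] {U : Ω → α} {V : Ω → β}
    (h : ∀ ω ω', p ω ≠ 0 → p ω' ≠ 0 → U ω = U ω' → V ω = V ω') :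
    ∃ f : α → β, ∀ ω, p ω ≠ 0 → V ω = f (U ω) := by
  refine ⟨fun a => if hx : ∃ ω, p ω ≠ 0 ∧ U ω = a then V hx.choose else Classical.arbitrary β,
    fun ω hω => ?_⟩
  have hx : ∃ ω', p ω' ≠ 0 ∧ U ω' = U ω := ⟨ω, hω, rfl⟩
  show V ω = if hx' : ∃ ω', p ω' ≠ 0 ∧ U ω' = U ω then V hx'.choose
    else Classical.arbitrary β
  rw [dif_pos hx]
  exact h ω hx.choose hω hx.choose_spec.1 hx.choose_spec.2.symm

/-- Hc = 0 implies a.s. determinism -/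
lemma congr_of_H_pair_eq (hp : ∀ ω, 0 ≤ p ω) {U : Ω → α} {V : Ω → β}
    (h : H p (fun ω => (U ω, V ω)) = H p U) :
    ∀ ω ω', p ω ≠ 0 → p ω' ≠ 0 → U ω = U ω' → V ω = V ω' := by
  intro ω ω' hω hω' hUU
  by_contra hVV
  -- each grouped term is nonneg; the one at `U ω` is strictly positive
  have hkey : ∀ u ∈ Finset.univ.image U,
      Real.negMulLog (pr p U u) ≤ ∑ v ∈ Finset.univ.image V,
        Real.negMulLog (pr p (fun ω => (U ω, V ω)) (u, v)) := by
    intro u _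
    rw [marginal_snd (p := p) (U := U) (V := V) (t := Finset.univ.image V)
      (le_refl _) u]
    exact negMulLog_sum_le fun v _ => pr_nonneg hp _ _
  have hstrict : Real.negMulLog (pr p U (U ω)) < ∑ v ∈ Finset.univ.image V,
      Real.negMulLog (pr p (fun ω => (U ω, V ω)) (U ω, v)) := by
    rw [marginal_snd (p := p) (U := U) (V := V) (t := Finset.univ.image V)
      (le_refl _) (U ω)]
    refine negMulLog_sum_lt (fun v _ => pr_nonneg hp _ _)
      (Finset.mem_image_of_mem V (Finset.mem_univ ω))
      (Finset.mem_image_of_mem V (Finset.mem_univ ω')) hVV ?_ ?_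
    · exact pr_pos hp hω
    · have : (U ω', V ω') = (U ω, V ω') := by rw [hUU]
      simpa [← this] using pr_pos (X := fun ω => (U ω, V ω)) hp hω'
  have hlt : H p U < H p (fun ω => (U ω, V ω)) := by
    rw [H_pair_eq_double_sum]
    unfold H
    exact Finset.sum_lt_sum hkey
      ⟨U ω, Finset.mem_image_of_mem U (Finset.mem_univ ω), hstrict⟩
  linarith

/-- Gibbs / subadditivity -/
lemma H_pair_le_add (hp : ∀ ω, 0 ≤ p ω) (hp1 : ∑ ω, p ω = 1)
    (U : Ω → α) (V : Ω → β) :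
    H p (fun ω => (U ω, V ω)) ≤ H p U + H p V := by
  set P : α × β → ℝ := pr p (fun ω => (U ω, V ω)) with hP
  set s := Finset.univ.image U ×ˢ Finset.univ.image V with hs
  have hPsum : ∑ x ∈ s, P x = 1 := by
    rw [hP, sum_pr_subset (by
      intro x hx
      simp only [Finset.mem_image] at hx
      obtain ⟨ω, _, rfl⟩ := hx
      exact Finset.mk_mem_product (Finset.mem_image_of_mem U (Finset.mem_univ ω))
        (Finset.mem_image_of_mem V (Finset.mem_univ ω))), hp1]
  have hQsum : ∑ x ∈ s, pr p U x.1 * pr p V x.2 = 1 := by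
    rw [hs, Finset.sum_product, ← Finset.sum_mul_sum]
    rw [sum_pr_subset (le_refl _), sum_pr_subset (le_refl _), hp1, one_mul]
  -- pointwise Gibbs
  have hpoint : ∀ x ∈ s, Real.negMulLog (P x) ≤
      -(P x * Real.log (pr p U x.1 * pr p V x.2)) + (pr p U x.1 * pr p V x.2 - P x) := by
    intro x hx
    set Q := pr p U x.1 * pr p V x.2 with hQ
    have hQ0 : 0 ≤ Q := mul_nonneg (pr_nonneg hp _ _) (pr_nonneg hp _ _)
    rcases eq_or_lt_of_le (pr_nonneg hp (fun ω => (U ω, V ω)) x) with h0 | hPpos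
    · have hP0 : P x = 0 := h0.symm
      rw [hP0]; simpa using hQ0
    · have hQpos : 0 < Q := by
        rcases exists_omega_of_pr_pos hPpos with ⟨ω, hω, hωx⟩
        have h1 : 0 < pr p U x.1 := by
          have := pr_pos (X := U) hp hω
          rwa [show U ω = x.1 from congrArg Prod.fst hωx] at this
        have h2 : 0 < pr p V x.2 := by
          have := pr_pos (X := V) hp hω
          rwa [show V ω = x.2 from congrArg Prod.snd hωx] at this
        exact mul_pos h1 h2
      have hlog := Real.log_le_sub_one_of_pos (div_pos hQpos hPpos)
      rw [Real.log_div (ne_of_gt hQpos) (ne_of_gt hPpos)] at hlog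
      have := mul_le_mul_of_nonneg_left hlog (le_of_lt hPpos)
      rw [mul_div_assoc] at this
      rw [Real.negMulLog, neg_mul]
      have hdiv : P x * (Q / P x) = Q := by field_simp; exact div_self (ne_of_gt hPpos)
      nlinarith
  have hsum := Finset.sum_le_sum hpoint
  rw [← H_eq_sum_subset (by
      intro x hx
      simp only [Finset.mem_image] at hx
      obtain ⟨ω, _, rfl⟩ := hx
      exact Finset.mk_mem_product (Finset.mem_image_of_mem U (Finset.mem_univ ω))
        (Finset.mem_image_of_mem V (Finset.mem_univ ω)))] at hsum
  have hsplit : ∑ x ∈ s, (-(P x * Real.log (pr p U x.1 * pr p V x.2))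
      + (pr p U x.1 * pr p V x.2 - P x))
      = (∑ x ∈ s, -(P x * Real.log (pr p U x.1 * pr p V x.2))) + (1 - 1) := by
    rw [Finset.sum_add_distrib, Finset.sum_sub_distrib, hPsum, hQsum]
  rw [hsplit] at hsum
  -- now split the log term
  have hlogsplit : ∑ x ∈ s, -(P x * Real.log (pr p U x.1 * pr p V x.2))
      = (∑ x ∈ s, -(P x * Real.log (pr p U x.1)))
        + ∑ x ∈ s, -(P x * Real.log (pr p V x.2)) := by
    rw [← Finset.sum_add_distrib]
    refine Finset.sum_congr rfl fun x hx => ?_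
    rcases eq_or_lt_of_le (pr_nonneg hp (fun ω => (U ω, V ω)) x) with h0 | hPpos
    · have hP0 : P x = 0 := h0.symm
      rw [hP0]; ring
    · rcases exists_omega_of_pr_pos hPpos with ⟨ω, hω, hωx⟩
      have h1 : 0 < pr p U x.1 := by
        have := pr_pos (X := U) hp hω
        rwa [show U ω = x.1 from congrArg Prod.fst hωx] at this
      have h2 : 0 < pr p V x.2 := by
        have := pr_pos (X := V) hp hω
        rwa [show V ω = x.2 from congrArg Prod.snd hωx] at this
      rw [Real.log_mul (ne_of_gt h1) (ne_of_gt h2)]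
      ring
  have hfstsum : ∑ x ∈ s, -(P x * Real.log (pr p U x.1)) = H p U := by
    rw [hs, Finset.sum_product]
    unfold H
    refine Finset.sum_congr rfl fun u _ => ?_
    calc ∑ v ∈ Finset.univ.image V, -(P (u, v) * Real.log (pr p U u))
        = -((∑ v ∈ Finset.univ.image V, P (u, v)) * Real.log (pr p U u)) := by
          rw [Finset.sum_neg_distrib, ← Finset.sum_mul]
      _ = Real.negMulLog (pr p U u) := by
          rw [← marginal_snd (p := p) (U := U) (V := V) (le_refl _) u,
            Real.negMulLog, neg_mul]
  have hsndsum : ∑ x ∈ s, -(P x * Real.log (pr p V x.2)) = H p V := by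
    rw [hs, Finset.sum_product, Finset.sum_comm]
    unfold H
    refine Finset.sum_congr rfl fun v _ => ?_
    calc ∑ u ∈ Finset.univ.image U, -(P (u, v) * Real.log (pr p V v))
        = -((∑ u ∈ Finset.univ.image U, P (u, v)) * Real.log (pr p V v)) := by
          rw [Finset.sum_neg_distrib, ← Finset.sum_mul]
      _ = Real.negMulLog (pr p V v) := by
          rw [← marginal_fst (p := p) (U := U) (V := V) (le_refl _) v,
            Real.negMulLog, neg_mul]
  rw [hlogsplit, hfstsum, hsndsum] at hsum
  linarith

lemma H_of_unif {β : Type*} [Fintype β] (hp : ∀ ω, 0 ≤ p ω) {V : Ω → β}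
    (hcard : 0 < Fintype.card β)
    (h : ∀ b, pr p V b = (Fintype.card β : ℝ)⁻¹) :
    H p V = Real.log (Fintype.card β) := by
  have hpos : (0:ℝ) < (Fintype.card β : ℝ)⁻¹ := by positivity
  have himg : Finset.univ.image V = (Finset.univ : Finset β) := by
    refine Finset.eq_univ_of_forall fun b => ?_
    by_contra hb
    have h0 := pr_eq_zero_of_not_mem_image (p := p) V hb
    rw [h b] at h0
    linarith
  unfold H
  rw [himg]
  rw [Finset.sum_congr rfl (fun b _ => by rw [h b])]
  rw [Finset.sum_const, Finset.card_univ, nsmul_eq_mul]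
  rw [Real.negMulLog, Real.log_inv]
  have hne : (Fintype.card β : ℝ) ≠ 0 := by positivity
  field_simp

lemma pr_comp_eq_sum_fiber {αt β : Type*} [Fintype αt] (V : Ω → αt) (g : αt → β) (b : β) :
    pr p (fun ω => g (V ω)) b
      = ∑ a ∈ Finset.univ.filter (fun a => g a = b), pr p V a := by
  unfold pr
  rw [Finset.sum_comm]
  refine Finset.sum_congr rfl fun ω _ => ?_
  by_cases h : g (V ω) = b
  · rw [if_pos h]
    have hmem : V ω ∈ Finset.univ.filter (fun a => g a = b) := by
      simp [Finset.mem_filter, h]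
    rw [Finset.sum_ite_eq (Finset.univ.filter (fun a => g a = b)) (V ω) (fun _ => p ω)]
    simp [hmem]
  · rw [if_neg h]
    refine (Finset.sum_eq_zero fun a ha => ?_).symm
    have hne : V ω ≠ a := fun hc => h (by rw [hc]; exact (Finset.mem_filter.1 ha).2)
    simp [hne]

lemma pr_comp_unif {αt β : Type*} [Fintype αt] [Fintype β] {V : Ω → αt}
    (hV : ∀ a, pr p V a = (Fintype.card αt : ℝ)⁻¹) (g : αt → β) (b : β) :
    pr p (fun ω => g (V ω)) b
      = (Fintype.card {a : αt // g a = b} : ℝ) * (Fintype.card αt : ℝ)⁻¹ := by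
  rw [pr_comp_eq_sum_fiber, Finset.sum_congr rfl (fun a _ => hV a), Finset.sum_const,
    nsmul_eq_mul, Fintype.card_subtype]

lemma pr_comp_unif' {αt β : Type*} [Fintype αt] {V : Ω → αt}
    (hV : ∀ a, pr p V a = (Fintype.card αt : ℝ)⁻¹) (g : αt → β) (b : β)
    {γ : Type*} [Fintype γ] (e : {a : αt // g a = b} ≃ γ) {c : ℕ}
    (hγ : Fintype.card γ = c) :
    pr p (fun ω => g (V ω)) b = (c : ℝ) * (Fintype.card αt : ℝ)⁻¹ := by
  have hc : Fintype.card {a : αt // g a = b} = c := (Fintype.card_congr e).trans hγ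
  have hc' : (Finset.univ.filter (fun a => g a = b)).card = c :=
    (Fintype.card_subtype _).symm.trans hc
  rw [pr_comp_eq_sum_fiber, Finset.sum_congr rfl (fun a _ => hV a), Finset.sum_const,
    nsmul_eq_mul, hc']

end Lemmas

lemma cardMat (m n : ℕ) : Fintype.card (Matrix (Fin m) (Fin n) (ZMod 5)) = 5 ^ (m * n) := by
  have h : Fintype.card (Matrix (Fin m) (Fin n) (ZMod 5))
      = Fintype.card (Fin m → Fin n → ZMod 5) :=
    Fintype.card_congr (Matrix.of (m := Fin m) (n := Fin n) (α := ZMod 5)).symm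
  rw [h]
  simp [← pow_mul, mul_comm]

lemma FmulEntry {L : ℕ} (w : Matrix (Fin 3) (Fin L) (ZMod 5)) (j : Fin L) :
    ((!![1,1,1] : Matrix (Fin 1) (Fin 3) (ZMod 5)) * w) 0 j = w 0 j + w 1 j + w 2 j := by
  simp [Matrix.mul_apply, Fin.sum_univ_three]

lemma GmulEntry {L : ℕ} (w : Matrix (Fin 3) (Fin L) (ZMod 5)) (j : Fin L) :
    ((!![1,2,3] : Matrix (Fin 1) (Fin 3) (ZMod 5)) * w) 0 j
      = w 0 j + 2 * w 1 j + 3 * w 2 j := by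
  simp [Matrix.mul_apply, Fin.sum_univ_three]

lemma GF_rel {L : ℕ} (w : Matrix (Fin 3) (Fin L) (ZMod 5)) (j : Fin L) :
    ((!![1,2,3] : Matrix (Fin 1) (Fin 3) (ZMod 5)) * w) 0 j
      = 3 * (((!![1,1,1] : Matrix (Fin 1) (Fin 3) (ZMod 5)) * w) 0 j)
        - 2 * w 0 j - w 1 j := by
  rw [GmulEntry, FmulEntry]; ring

noncomputable def fiberB_equiv (L : ℕ) (b : Matrix (Fin 1) (Fin L) (ZMod 5)) :
    {w : Matrix (Fin 3) (Fin L) (ZMod 5) //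
      (!![1,1,1] : Matrix (Fin 1) (Fin 3) (ZMod 5)) * w = b}
      ≃ Matrix (Fin 2) (Fin L) (ZMod 5) where
  toFun w := Matrix.of ![w.1 1, w.1 2]
  invFun m := ⟨Matrix.of ![fun j => b 0 j - m 0 j - m 1 j, m 0, m 1], by
    refine Matrix.ext fun i j => ?_
    have hi : i = 0 := Subsingleton.elim i 0
    subst hi
    rw [FmulEntry]
    simp
    ring⟩
  left_inv := by
    rintro ⟨w, hw⟩
    apply Subtype.ext
    refine Matrix.ext fun i j => ?_
    have h := congrFun (congrFun hw 0) j
    rw [FmulEntry] at h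
    fin_cases i <;> simp <;>
      first
        | rfl
        | linear_combination (1)*h
        | linear_combination (-1)*h
        | linear_combination (2)*h
        | linear_combination (-2)*h
        | linear_combination (3)*h
        | linear_combination (-3)*h
  right_inv := by
    intro m
    refine Matrix.ext fun i j => ?_
    fin_cases i <;> simp

noncomputable def fiberGF_equiv (L : ℕ) (a b : Matrix (Fin 1) (Fin L) (ZMod 5)) :
    {w : Matrix (Fin 3) (Fin L) (ZMod 5) //
      ((!![1,2,3] : Matrix (Fin 1) (Fin 3) (ZMod 5)) * w,
       (!![1,1,1] : Matrix (Fin 1) (Fin 3) (ZMod 5)) * w) = (a, b)}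
      ≃ (Fin L → ZMod 5) where
  toFun w := w.1 2
  invFun t := ⟨Matrix.of ![fun j => 2 * b 0 j - a 0 j + t j,
      fun j => a 0 j - b 0 j - 2 * t j, t], by
    refine Prod.ext ?_ ?_ <;> refine Matrix.ext fun i j => ?_ <;>
      · have hi : i = 0 := Subsingleton.elim i 0
        subst hi
        dsimp only
        first
          | rw [GmulEntry]
          | rw [FmulEntry]
        simp
        ring⟩
  left_inv := by
    rintro ⟨w, hw⟩
    apply Subtype.ext
    refine Matrix.ext fun i j => ?_
    have hG := congrFun (congrFun (congrArg Prod.fst hw) 0) j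
    have hF := congrFun (congrFun (congrArg Prod.snd hw) 0) j
    dsimp only at hG hF
    rw [GmulEntry] at hG
    rw [FmulEntry] at hF
    fin_cases i <;> simp <;>
      first
        | rfl
        | linear_combination (-3)*hG + (-3)*hF
        | linear_combination (-3)*hG + (-2)*hF
        | linear_combination (-3)*hG + (-1)*hF
        | linear_combination (-3)*hG
        | linear_combination (-3)*hG + (1)*hF
        | linear_combination (-3)*hG + (2)*hF
        | linear_combination (-3)*hG + (3)*hF
        | linear_combination (-2)*hG + (-3)*hF
        | linear_combination (-2)*hG + (-2)*hF
        | linear_combination (-2)*hG + (-1)*hF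
        | linear_combination (-2)*hG
        | linear_combination (-2)*hG + (1)*hF
        | linear_combination (-2)*hG + (2)*hF
        | linear_combination (-2)*hG + (3)*hF
        | linear_combination (-1)*hG + (-3)*hF
        | linear_combination (-1)*hG + (-2)*hF
        | linear_combination (-1)*hG + (-1)*hF
        | linear_combination (-1)*hG
        | linear_combination (-1)*hG + (1)*hF
        | linear_combination (-1)*hG + (2)*hF
        | linear_combination (-1)*hG + (3)*hF
        | linear_combination (-3)*hF
        | linear_combination (-2)*hF
        | linear_combination (-1)*hF
        | linear_combination (1)*hF
        | linear_combination (2)*hF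
        | linear_combination (3)*hF
        | linear_combination (1)*hG + (-3)*hF
        | linear_combination (1)*hG + (-2)*hF
        | linear_combination (1)*hG + (-1)*hF
        | linear_combination (1)*hG
        | linear_combination (1)*hG + (1)*hF
        | linear_combination (1)*hG + (2)*hF
        | linear_combination (1)*hG + (3)*hF
        | linear_combination (2)*hG + (-3)*hF
        | linear_combination (2)*hG + (-2)*hF
        | linear_combination (2)*hG + (-1)*hF
        | linear_combination (2)*hG
        | linear_combination (2)*hG + (1)*hF
        | linear_combination (2)*hG + (2)*hF
        | linear_combination (2)*hG + (3)*hF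
        | linear_combination (3)*hG + (-3)*hF
        | linear_combination (3)*hG + (-2)*hF
        | linear_combination (3)*hG + (-1)*hF
        | linear_combination (3)*hG
        | linear_combination (3)*hG + (1)*hF
        | linear_combination (3)*hG + (2)*hF
        | linear_combination (3)*hG + (3)*hF
  right_inv := by
    intro t
    funext j
    simp

section MainProof
open Matrix

variable {L : ℕ}

lemma ite_row_sum {α : Type*} [AddCommMonoid α] (k : Fin 3) (x : α) :
    (if (0:Fin 3) = k then x else 0) + (if (1:Fin 3) = k then x else 0)
      + (if (2:Fin 3) = k then x else 0) = x := by
  fin_cases k <;> simp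

/-- **Individual key rate converse for the open example.** Over `𝔽₅` with
`F = (1,1,1)` and `G = (1,2,3)`, any secure aggregation scheme satisfies
`H[Z₁] + H[Z₂] ≥ L log 5`, hence `max(H[Z₁], H[Z₂]) ≥ (L/2) log 5`, i.e. the
individual key rate is at least `1/2`. -/
theorem example_individual_key_converse
    {L : ℕ} (hL : 1 ≤ L)
    (Ω : Type) [Fintype Ω] (κ : Fin 3 → Type) (σ : Type) (χ : Fin 3 → Type)
    (S : Scheme (ZMod 5) L (!![1, 1, 1]) (!![1, 2, 3]) Ω κ σ χ) :
    (L : ℝ) * Real.log 5 ≤ H S.p (S.Z 0) + H S.p (S.Z 1)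
      ∧ ((L : ℝ) / 2) * Real.log 5 ≤ max (H S.p (S.Z 0)) (H S.p (S.Z 1)) := by
  have hp : ∀ ω, 0 ≤ S.p ω := S.p_nonneg
  have hp1 : ∑ ω, S.p ω = 1 := S.p_sum_one
  haveI : Nonempty (Matrix (Fin 1) (Fin L) (ZMod 5)) := ⟨0⟩
  -- uniformity of F·W
  have hWu : ∀ w, pr S.p S.W w
      = (Fintype.card (Matrix (Fin 3) (Fin L) (ZMod 5)) : ℝ)⁻¹ := S.W_unif
  have hBu : ∀ b : Matrix (Fin 1) (Fin L) (ZMod 5),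
      pr S.p (fun ω => (!![1,1,1] : Matrix (Fin 1) (Fin 3) (ZMod 5)) * S.W ω) b
        = (Fintype.card (Matrix (Fin 1) (Fin L) (ZMod 5)) : ℝ)⁻¹ := by
    intro b
    refine Eq.trans (pr_comp_unif' hWu
      (fun w => (!![1,1,1] : Matrix (Fin 1) (Fin 3) (ZMod 5)) * w) b
      (fiberB_equiv L b) (cardMat 2 L)) ?_
    rw [cardMat, cardMat]
    push_cast
    rw [show 3*L = 2*L + 1*L by ring, pow_add]
    have h1 : ((5:ℝ))^(2*L) ≠ 0 := by positivity
    have h2 : ((5:ℝ))^(1*L) ≠ 0 := by positivity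
    field_simp
  have hB : H S.p (fun ω => (!![1,1,1] : Matrix (Fin 1) (Fin 3) (ZMod 5)) * S.W ω) = (L : ℝ) * Real.log 5 := by
    rw [H_of_unif hp Fintype.card_pos hBu, cardMat]
    push_cast [Real.log_pow]
    ring
  -- uniformity of the pair (G·W, F·W)
  have hABu : ∀ y : Matrix (Fin 1) (Fin L) (ZMod 5) × Matrix (Fin 1) (Fin L) (ZMod 5),
      pr S.p (fun ω => ((!![1,2,3] : Matrix (Fin 1) (Fin 3) (ZMod 5)) * S.W ω, (!![1,1,1] : Matrix (Fin 1) (Fin 3) (ZMod 5)) * S.W ω)) y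
        = (Fintype.card (Matrix (Fin 1) (Fin L) (ZMod 5)
            × Matrix (Fin 1) (Fin L) (ZMod 5)) : ℝ)⁻¹ := by
    rintro ⟨a, b⟩
    have cFun : Fintype.card (Fin L → ZMod 5) = 5 ^ L := by
      simp [ZMod.card]
    refine Eq.trans (pr_comp_unif' hWu
      (fun w => ((!![1,2,3] : Matrix (Fin 1) (Fin 3) (ZMod 5)) * w,
        (!![1,1,1] : Matrix (Fin 1) (Fin 3) (ZMod 5)) * w)) (a, b)
      (fiberGF_equiv L a b) cFun) ?_
    have c1 : Fintype.card (Matrix (Fin 1) (Fin L) (ZMod 5)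
        × Matrix (Fin 1) (Fin L) (ZMod 5)) = 5 ^ (2 * L) := by
      rw [Fintype.card_prod, cardMat, ← pow_add]
      congr 1
      ring
    rw [cardMat, c1]
    push_cast
    rw [show 3*L = L + 2*L by ring, pow_add]
    have h2 : ((5:ℝ))^(2*L) ≠ 0 := by positivity
    have h3 : ((5:ℝ))^L ≠ 0 := by positivity
    field_simp
  have hAB : H S.p (fun ω => ((!![1,2,3] : Matrix (Fin 1) (Fin 3) (ZMod 5)) * S.W ω, (!![1,1,1] : Matrix (Fin 1) (Fin 3) (ZMod 5)) * S.W ω))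
      = (2 * L : ℝ) * Real.log 5 := by
    have c1 : Fintype.card (Matrix (Fin 1) (Fin L) (ZMod 5)
        × Matrix (Fin 1) (Fin L) (ZMod 5)) = 5 ^ (2 * L) := by
      rw [Fintype.card_prod, cardMat, ← pow_add]
      congr 1
      ring
    rw [H_of_unif hp Fintype.card_pos hABu, c1]
    push_cast [Real.log_pow]
    ring
  -- correctness : B is determined by the messages
  have hcor : H S.p (fun ω => ((!![1,1,1] : Matrix (Fin 1) (Fin 3) (ZMod 5)) * S.W ω, fun k => S.X k ω))
      = H S.p (fun ω (k : Fin 3) => S.X k ω) := by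
    have h := S.correct
    unfold Hc at h
    linarith
  have hBcongr : ∀ ω ω', S.p ω ≠ 0 → S.p ω' ≠ 0 →
      (fun k => S.X k ω) = (fun k => S.X k ω') →
      (!![1,1,1] : Matrix (Fin 1) (Fin 3) (ZMod 5)) * S.W ω = (!![1,1,1] : Matrix (Fin 1) (Fin 3) (ZMod 5)) * S.W ω' := by
    have hswap : H S.p (fun ω => ((fun k => S.X k ω), (!![1,1,1] : Matrix (Fin 1) (Fin 3) (ZMod 5)) * S.W ω))
        = H S.p (fun ω (k : Fin 3) => S.X k ω) := by
      rw [H_pair_swap]; exact hcor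
    exact congr_of_H_pair_eq hp hswap
  -- deterministic key / message functions
  choose g hg using S.Z_det
  choose f hf using S.X_det
  -- support extraction from independence
  have hexists : ∀ (w : Matrix (Fin 3) (Fin L) (ZMod 5)) (s : σ),
      pr S.p S.Zsrc s ≠ 0 → ∃ ω, S.p ω ≠ 0 ∧ S.W ω = w ∧ S.Zsrc ω = s := by
    intro w s hs
    have hZpair : pr S.p (fun ω => ((fun k => S.Z k ω), S.Zsrc ω)) ((fun k => g k s), s)
        = pr S.p S.Zsrc s := by
      refine Finset.sum_congr rfl fun ω _ => ?_
      by_cases h : S.Zsrc ω = s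
      · rw [if_pos h, if_pos (Prod.ext
          (funext fun k => show S.Z k ω = g k s by rw [hg k ω, h]) h)]
      · rw [if_neg h, if_neg fun hc => h (congrArg Prod.snd hc)]
    have hpos : 0 < pr S.p (fun ω => (S.W ω, ((fun k => S.Z k ω), S.Zsrc ω)))
        (w, ((fun k => g k s), s)) := by
      rw [S.indep, hZpair, hWu w]
      have h1 : (0:ℝ) < (Fintype.card (Matrix (Fin 3) (Fin L) (ZMod 5)) : ℝ)⁻¹ := by
        have := Fintype.card_pos (α := Matrix (Fin 3) (Fin L) (ZMod 5))
        positivity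
      have h2 : 0 < pr S.p S.Zsrc s :=
        lt_of_le_of_ne (pr_nonneg hp _ _) (Ne.symm hs)
      exact mul_pos h1 h2
    obtain ⟨ω, hω, hval⟩ := exists_omega_of_pr_pos hpos
    exact ⟨ω, hω, congrArg Prod.fst hval, congrArg (fun z => z.2.2) hval⟩
  -- row determination: same own message and key force the same input row
  have hrow : ∀ (k : Fin 3) (ω ω' : Ω), S.p ω ≠ 0 → S.p ω' ≠ 0 →
      S.X k ω = S.X k ω' → S.Z k ω = S.Z k ω' → S.W ω k = S.W ω' k := by
    intro k ω ω' hω hω' hX hZ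
    by_contra hne
    obtain ⟨j, hj⟩ := Function.ne_iff.1 hne
    obtain ⟨ω₁, h1, hw1, hs1⟩ := hexists (fun i j => if i = k then S.W ω k j else 0)
      (S.Zsrc ω) (ne_of_gt (pr_pos hp hω))
    obtain ⟨ω₂, h2, hw2, hs2⟩ := hexists (fun i j => if i = k then S.W ω' k j else 0)
      (S.Zsrc ω) (ne_of_gt (pr_pos hp hω))
    -- the two outcomes have identical messages
    have hXeq : (fun i => S.X i ω₁) = (fun i => S.X i ω₂) := by
      funext i
      rw [hf i ω₁, hf i ω₂, hw1, hw2, hg i ω₁, hg i ω₂, hs1, hs2]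
      by_cases hik : i = k
      · subst hik
        have hrow1 : (fun j => if i = i then S.W ω i j else 0) = S.W ω i :=
          funext fun j => if_pos rfl
        have hrow2 : (fun j => if i = i then S.W ω' i j else 0) = S.W ω' i :=
          funext fun j => if_pos rfl
        show f i (fun j => if i = i then S.W ω i j else 0) (g i (S.Zsrc ω))
          = f i (fun j => if i = i then S.W ω' i j else 0) (g i (S.Zsrc ω))
        rw [hrow1, hrow2]
        have e1 : S.X i ω = f i (S.W ω i) (g i (S.Zsrc ω)) := by
          rw [hf i ω, hg i ω]
        have e2 : S.X i ω' = f i (S.W ω' i) (g i (S.Zsrc ω)) := by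
          rw [hf i ω', ← hZ, hg i ω]
        rw [← e1, ← e2, hX]
      · show f i (fun j => if i = k then S.W ω k j else 0) (g i (S.Zsrc ω))
          = f i (fun j => if i = k then S.W ω' k j else 0) (g i (S.Zsrc ω))
        have hrow1 : (fun j => if i = k then S.W ω k j else 0)
            = (fun j => if i = k then S.W ω' k j else 0) := by
          funext j; rw [if_neg hik, if_neg hik]
        rw [hrow1]
    -- but their F·W values differ at column j
    have hBeq := hBcongr ω₁ ω₂ h1 h2 hXeq
    rw [hw1, hw2] at hBeq
    have hent := congrFun (congrFun hBeq 0) j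
    replace hent := (FmulEntry _ j).symm.trans (hent.trans (FmulEntry _ j))
    have hent' : ((if (0:Fin 3) = k then S.W ω k j else 0)
          + (if (1:Fin 3) = k then S.W ω k j else 0)
          + (if (2:Fin 3) = k then S.W ω k j else 0))
        = ((if (0:Fin 3) = k then S.W ω' k j else 0)
          + (if (1:Fin 3) = k then S.W ω' k j else 0)
          + (if (2:Fin 3) = k then S.W ω' k j else 0)) := hent
    rw [ite_row_sum k (S.W ω k j), ite_row_sum k (S.W ω' k j)] at hent'
    exact hj hent'
  -- main determinism claim : (Z₀, Z₁, X) determines G·W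
  have hTcongr : ∀ ω ω', S.p ω ≠ 0 → S.p ω' ≠ 0 →
      (fun ω => (S.Z 0 ω, S.Z 1 ω, fun k => S.X k ω)) ω
        = (fun ω => (S.Z 0 ω, S.Z 1 ω, fun k => S.X k ω)) ω' →
      (!![1,2,3] : Matrix (Fin 1) (Fin 3) (ZMod 5)) * S.W ω = (!![1,2,3] : Matrix (Fin 1) (Fin 3) (ZMod 5)) * S.W ω' := by
    intro ω ω' hω hω' hT
    simp only [Prod.mk.injEq] at hT
    obtain ⟨hZ0, hZ1, hXe⟩ := hT
    have hX0 : S.X 0 ω = S.X 0 ω' := congrFun hXe 0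
    have hX1 : S.X 1 ω = S.X 1 ω' := congrFun hXe 1
    have hW0 := hrow 0 ω ω' hω hω' hX0 hZ0
    have hW1 := hrow 1 ω ω' hω hω' hX1 hZ1
    have hBe := hBcongr ω ω' hω hω' hXe
    refine Matrix.ext fun i j => ?_
    have hi : i = 0 := Subsingleton.elim i 0
    subst hi
    rw [GF_rel, GF_rel, congrFun (congrFun hBe 0) j,
      congrFun hW0 j, congrFun hW1 j]
  -- choose the deterministic maps
  obtain ⟨fB, hfB⟩ := exists_fn_of_congr hBcongr
  obtain ⟨fA, hfA⟩ := exists_fn_of_congr hTcongr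
  -- security identity
  have hsec := S.secure
  unfold CMI at hsec
  have hXB : H S.p (fun ω => ((fun k => S.X k ω), (!![1,1,1] : Matrix (Fin 1) (Fin 3) (ZMod 5)) * S.W ω))
      = H S.p (fun ω (k : Fin 3) => S.X k ω) := by
    have h1 : H S.p (fun ω => ((fun k => S.X k ω), (!![1,1,1] : Matrix (Fin 1) (Fin 3) (ZMod 5)) * S.W ω))
        = H S.p (fun ω => ((fun k => S.X k ω), fB (fun k => S.X k ω))) :=
      H_congr_supp fun ω hω => by rw [hfB ω hω]
    rw [h1]
    exact H_comp_inj (U := fun ω (k : Fin 3) => S.X k ω)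
      (ψ := fun x => (x, fB x)) fun u v huv => congrArg Prod.fst huv
  have hAXB : H S.p (fun ω => ((!![1,2,3] : Matrix (Fin 1) (Fin 3) (ZMod 5)) * S.W ω, (fun k => S.X k ω),
        (!![1,1,1] : Matrix (Fin 1) (Fin 3) (ZMod 5)) * S.W ω))
      = H S.p (fun ω => ((!![1,2,3] : Matrix (Fin 1) (Fin 3) (ZMod 5)) * S.W ω, fun k => S.X k ω)) := by
    have h1 : H S.p (fun ω => ((!![1,2,3] : Matrix (Fin 1) (Fin 3) (ZMod 5)) * S.W ω, (fun k => S.X k ω),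
          (!![1,1,1] : Matrix (Fin 1) (Fin 3) (ZMod 5)) * S.W ω))
        = H S.p (fun ω => ((!![1,2,3] : Matrix (Fin 1) (Fin 3) (ZMod 5)) * S.W ω, (fun k => S.X k ω),
          fB (fun k => S.X k ω))) :=
      H_congr_supp fun ω hω => by rw [hfB ω hω]
    rw [h1]
    exact H_comp_inj (U := fun ω => ((!![1,2,3] : Matrix (Fin 1) (Fin 3) (ZMod 5)) * S.W ω, fun k => S.X k ω))
      (ψ := fun x => (x.1, x.2, fB x.2)) fun u v huv => by
        have e1 := congrArg Prod.fst huv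
        have e2 := congrArg (fun z => z.2.1) huv
        exact Prod.ext e1 e2
  -- hence H(A, X) = H(X) + L log 5
  have hkey : H S.p (fun ω => ((!![1,2,3] : Matrix (Fin 1) (Fin 3) (ZMod 5)) * S.W ω, fun k => S.X k ω))
      = H S.p (fun ω (k : Fin 3) => S.X k ω) + (L : ℝ) * Real.log 5 := by
    rw [hXB, hAXB] at hsec
    linarith [hAB, hB]
  -- upper bound via the keys
  have hTA : H S.p (fun ω => ((S.Z 0 ω, S.Z 1 ω, fun k => S.X k ω),
      (!![1,2,3] : Matrix (Fin 1) (Fin 3) (ZMod 5)) * S.W ω)) = H S.p (fun ω => (S.Z 0 ω, S.Z 1 ω, fun k => S.X k ω)) :=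
    H_pair_of_fn hfA
  have hup1 : H S.p (fun ω => ((!![1,2,3] : Matrix (Fin 1) (Fin 3) (ZMod 5)) * S.W ω, fun k => S.X k ω))
      ≤ H S.p (fun ω => ((S.Z 0 ω, S.Z 1 ω, fun k => S.X k ω), (!![1,2,3] : Matrix (Fin 1) (Fin 3) (ZMod 5)) * S.W ω)) :=
    H_comp_le hp (fun ω => ((S.Z 0 ω, S.Z 1 ω, fun k => S.X k ω), (!![1,2,3] : Matrix (Fin 1) (Fin 3) (ZMod 5)) * S.W ω))
      (fun y => (y.2, y.1.2.2))
  have hup2 : H S.p (fun ω => (S.Z 0 ω, S.Z 1 ω, fun k => S.X k ω))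
      ≤ H S.p (S.Z 0) + H S.p (fun ω => (S.Z 1 ω, fun k => S.X k ω)) :=
    H_pair_le_add hp hp1 (S.Z 0) (fun ω => (S.Z 1 ω, fun k => S.X k ω))
  have hup3 : H S.p (fun ω => (S.Z 1 ω, fun k => S.X k ω))
      ≤ H S.p (S.Z 1) + H S.p (fun ω (k : Fin 3) => S.X k ω) :=
    H_pair_le_add hp hp1 (S.Z 1) (fun ω (k : Fin 3) => S.X k ω)
  have hmain : (L : ℝ) * Real.log 5 ≤ H S.p (S.Z 0) + H S.p (S.Z 1) := by
    linarith
  refine ⟨hmain, ?_⟩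
  have m1 := le_max_left (H S.p (S.Z 0)) (H S.p (S.Z 1))
  have m2 := le_max_right (H S.p (S.Z 0)) (H S.p (S.Z 1))
  linarith

end MainProof


end SecAgg
end

section
/- Let 𝔽 be a finite field with q elements, F ∈ 𝔽^{M×K} of the block form [I_M | F̃] with full row rank, G ∈ 𝔽^{N×K}, and r = rank([F; G]). Let V ∈ 𝔽^{(K−r)×(K−M)} be such that the stacked matrix [F; G; [0_{(K−r)×M} | V]] has rank K, and let V⊥ ∈ 𝔽^{(K−M)×(r−M)} have full column rank r−M and satisfy V·V⊥ = 0. On the product space of all pairs (W, S) with W a K×L matrix and S an (r−M)×L matrix over 𝔽, equipped with the uniform probability measure, define N = V⊥·S and messages X with rows 1 through M equal to the first M rows of W minus F̃·N, and rows M+1 through K equal to the last K−M rows of W plus N. Then the conditional entropy of the message tuple given F·W is maximal: H[(X_1, …, X_K) | F·W] = (K − M) · L · log q. -/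
/-!
Shannon entropy machinery for finitely-supported random variables on a finite
probability space, and the definition of a vector-linear secure aggregation
scheme (Yuan–Sun, "Vector Linear Secure Aggregation").
-/

open scoped BigOperators Classical

/-!
The messages differ from `W` by `[-F̃ N; N]`, which `F = [I | F̃]` annihilates, so `F X = F W` and
`H[X | F W] = H[X] - H[F X]`. Both `X` and `F X` are images of the uniform `(W, S)` under
surjective additive maps, whose fibres all have the same size; hence both are uniform, with
entropies `(M + K') L log q` and `M L log q`.
-/

namespace SecAgg

open Finset

section Entropy

variable {Ω α β : Type*} [Fintype Ω]

theorem H_comp_of_injective (p : Ω → ℝ) (X : Ω → α) {φ : α → β}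
    (hφ : Function.Injective φ) : H p (fun ω => φ (X ω)) = H p X := by
  have hpr (a : α) : pr p (fun ω => φ (X ω)) (φ a) = pr p X a := by
    simp only [pr, hφ.eq_iff]
  rw [H, show univ.image (fun ω => φ (X ω)) = (univ.image X).image φ from image_image.symm,
    sum_image fun a _ b _ h => hφ h]
  exact sum_congr rfl fun a _ => by rw [hpr]

theorem Hc_comp_eq_sub (p : Ω → ℝ) (X : Ω → α) (f : α → β) :
    Hc p X (fun ω => f (X ω)) = H p X - H p (fun ω => f (X ω)) := by
  rw [Hc, H_comp_of_injective p X (φ := fun a => (a, f a)) fun a b h => congrArg Prod.fst h]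

theorem H_eq_log_card_of_pr_eq [Fintype α] (p : Ω → ℝ) (X : Ω → α)
    (hX : ∀ a, pr p X a = (Fintype.card α : ℝ)⁻¹) :
    H p X = Real.log (Fintype.card α) := by
  have hsurj : Function.Surjective X := by
    intro a
    have hne : pr p X a ≠ 0 := by
      have : Nonempty α := ⟨a⟩
      rw [hX]; positivity
    by_contra! h
    exact hne (sum_eq_zero fun ω _ => if_neg (h ω))
  rw [H, image_univ_of_surjective hsurj, sum_congr rfl fun a _ => by rw [hX a], sum_const,
    card_univ, nsmul_eq_mul, Real.negMulLog, Real.log_inv]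
  rcases isEmpty_or_nonempty α with _ | _
  · simp
  · field_simp

theorem pr_uniform_of_surjective [AddGroup Ω] [AddGroup β] [Fintype β]
    (f : Ω →+ β) (hf : Function.Surjective f) (b : β) :
    pr (fun _ => (Fintype.card Ω : ℝ)⁻¹) f b = (Fintype.card β : ℝ)⁻¹ := by
  have hfiber (c : β) : #{ω | f ω = c} = #{ω | f ω = b} :=
    AddMonoidHom.card_fiber_eq_of_mem_range f (hf c) (hf b)
  have hcard : Fintype.card Ω = Fintype.card β * #{ω | f ω = b} := by
    rw [← card_univ, card_eq_sum_card_fiberwise (f := f) (t := univ) fun _ _ => mem_univ _]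
    simp [hfiber]
  have : Nonempty Ω := ⟨0⟩
  have hpos : 0 < #{ω | f ω = b} :=
    Nat.pos_of_mul_pos_left (hcard ▸ Fintype.card_pos (α := Ω))
  rw [pr, ← sum_filter, sum_const, nsmul_eq_mul, hcard]
  push_cast
  field_simp

theorem H_uniform_of_surjective [AddGroup Ω] [AddGroup β] [Fintype β]
    (f : Ω →+ β) (hf : Function.Surjective f) :
    H (fun _ => (Fintype.card Ω : ℝ)⁻¹) f = Real.log (Fintype.card β) :=
  H_eq_log_card_of_pr_eq _ _ (pr_uniform_of_surjective f hf)

end Entropy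

theorem card_matrix {m l α : Type*} [Fintype m] [DecidableEq m] [Fintype l] [DecidableEq l]
    [Fintype α] :
    Fintype.card (Matrix m l α) = Fintype.card α ^ (Fintype.card m * Fintype.card l) := by
  rw [mul_comm, pow_mul, ← Fintype.card_fun, ← Fintype.card_fun]
  rfl

section Scheme

open Matrix

variable {R : Type*} [Ring R] {m k l n : Type*} [Fintype k] [Fintype n]

/-- The messages `X = W + [-F̃ N; N]`, `N = V⊥ S`, of the achievable scheme, as an additive map
of `(W, S)`. -/
def maskedMessages (Ft : Matrix m k R) (Vp : Matrix k n R) :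
    Matrix (m ⊕ k) l R × Matrix n l R →+ Matrix (m ⊕ k) l R :=
  AddMonoidHom.mk'
    (fun ω => fromRows (ω.1.submatrix Sum.inl id - Ft * (Vp * ω.2))
      (ω.1.submatrix Sum.inr id + Vp * ω.2))
    fun a b => by ext (i | i) j <;> simp [Matrix.mul_add] <;> abel

theorem maskedMessages_surjective (Ft : Matrix m k R) (Vp : Matrix k n R) :
    Function.Surjective (maskedMessages (l := l) Ft Vp) :=
  fun x => ⟨(x, 0), by ext (i | i) j <;> simp [maskedMessages]⟩

def fromColsOneMul [Fintype m] [DecidableEq m] (Ft : Matrix m k R) :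
    Matrix (m ⊕ k) l R →+ Matrix m l R :=
  AddMonoidHom.mk' (fromCols 1 Ft * ·) fun a b => Matrix.mul_add _ a b

theorem fromColsOneMul_surjective [Fintype m] [DecidableEq m] (Ft : Matrix m k R) :
    Function.Surjective (fromColsOneMul (l := l) Ft) :=
  fun y => ⟨fromRows y 0, by simp [fromColsOneMul, fromCols_mul_fromRows]⟩

theorem fromColsOneMul_maskedMessages [Fintype m] [DecidableEq m] (Ft : Matrix m k R)
    (Vp : Matrix k n R) (ω : Matrix (m ⊕ k) l R × Matrix n l R) :
    fromColsOneMul Ft (maskedMessages Ft Vp ω) = fromColsOneMul Ft ω.1 := by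
  conv_rhs => rw [← fromRows_toRows ω.1]
  simp only [fromColsOneMul, maskedMessages, AddMonoidHom.mk'_apply, fromCols_mul_fromRows,
    Matrix.one_mul, Matrix.mul_add, Matrix.mul_sub]
  rw [sub_add_add_cancel]
  rfl

end Scheme

theorem achievable_scheme_cond_entropy_max_general
    {𝔽 : Type} [Field 𝔽] [Fintype 𝔽] {M K' L r : ℕ}
    (Ft : Matrix (Fin M) (Fin K') 𝔽)
    (Vp : Matrix (Fin K') (Fin (r - M)) 𝔽) :
    Hc
      (fun _ : Matrix (Fin M ⊕ Fin K') (Fin L) 𝔽 × Matrix (Fin (r - M)) (Fin L) 𝔽 =>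
        (Fintype.card
          (Matrix (Fin M ⊕ Fin K') (Fin L) 𝔽 × Matrix (Fin (r - M)) (Fin L) 𝔽) : ℝ)⁻¹)
      (fun ω => Matrix.fromRows
          (ω.1.submatrix Sum.inl id - Ft * (Vp * ω.2))
          (ω.1.submatrix Sum.inr id + Vp * ω.2))
      (fun ω => (Matrix.fromCols 1 Ft) * ω.1)
      = (K' : ℝ) * L * Real.log (Fintype.card 𝔽) := by
  -- `fromCols 1 Ft * ω.1` above elaborates through `CStarMatrix`'s `HMul`; it is defeq to this.
  change Hc _ (maskedMessages Ft Vp) (fun ω => fromColsOneMul Ft ω.1) = _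
  simp_rw [← fromColsOneMul_maskedMessages Ft Vp, Hc_comp_eq_sub]
  have hFX : H _ (fun ω => fromColsOneMul Ft (maskedMessages Ft Vp ω)) = _ :=
    H_uniform_of_surjective ((fromColsOneMul (l := Fin L) Ft).comp (maskedMessages Ft Vp))
      ((fromColsOneMul_surjective Ft).comp (maskedMessages_surjective Ft Vp))
  rw [H_uniform_of_surjective _ (maskedMessages_surjective Ft Vp), hFX, card_matrix, card_matrix]
  simp only [Fintype.card_sum, Fintype.card_fin, Nat.cast_pow, Real.log_pow]
  push_cast
  ring

/-- **Maximal conditional message entropy of the achievable scheme.** Under the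
same construction as the general achievable scheme, the conditional entropy of
the message tuple given `F·W` is maximal: `H[X | F·W] = (K − M) · L · log q`
(here `K − M = K'`). -/
theorem achievable_scheme_cond_entropy_max
    {𝔽 : Type} [Field 𝔽] [Fintype 𝔽] {M K' N L r : ℕ}
    (Ft : Matrix (Fin M) (Fin K') 𝔽) (G : Matrix (Fin N) (Fin M ⊕ Fin K') 𝔽)
    (hr : r = (Matrix.fromRows (Matrix.fromCols 1 Ft) G).rank)
    (V : Matrix (Fin (M + K' - r)) (Fin K') 𝔽)
    (hV : (Matrix.fromRows (Matrix.fromRows (Matrix.fromCols 1 Ft) G)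
        (Matrix.fromCols (0 : Matrix (Fin (M + K' - r)) (Fin M) 𝔽) V)).rank
          = M + K')
    (Vp : Matrix (Fin K') (Fin (r - M)) 𝔽)
    (hVp : Vp.rank = r - M)
    (hVVp : V * Vp = 0) :
    Hc
      (fun _ : Matrix (Fin M ⊕ Fin K') (Fin L) 𝔽 × Matrix (Fin (r - M)) (Fin L) 𝔽 =>
        (Fintype.card
          (Matrix (Fin M ⊕ Fin K') (Fin L) 𝔽 × Matrix (Fin (r - M)) (Fin L) 𝔽) : ℝ)⁻¹)
      (fun ω => Matrix.fromRows
          (ω.1.submatrix Sum.inl id - Ft * (Vp * ω.2))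
          (ω.1.submatrix Sum.inr id + Vp * ω.2))
      (fun ω => (Matrix.fromCols 1 Ft) * ω.1)
      = (K' : ℝ) * L * Real.log (Fintype.card 𝔽) :=
  achievable_scheme_cond_entropy_max_general Ft Vp

end SecAgg
end
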